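/- arXiv:2412.12807 — 8 statements merged into one kernel-verified Lean document; each statement's English description precedes it below -/
import Mathlib

section
/- Let f, g be nonnegative measurable functions, c > 0, and suppose there exists a set A* of the form A* = {x : g(x) < t_c·f(x)} ∪ M_c with t_c ≥ 0 and M_c ⊆ {x : g(x) = t_c·f(x)}, such that ∫_{A*} f dμ = c. Then for every measurable set A with ∫_A f dμ = c, one has ∫_{A*} g dμ ≤ ∫_A g dμ. -/
open MeasureTheory Set

/-! The set `A* = {g < t f} ∪ M` is the sublevel set `{g - t f ≤ 0}` up to part of its zero set.
For `h = g - t f` the indicator of `h` on `A*` lies pointwise below its indicator on any other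
set `A`, so `∫_{A*} h ≤ ∫_A h`; since `∫_{A*} f = ∫_A f`, the terms `t ∫ f` cancel. -/

section Bathtub

variable {α : Type*} [MeasurableSpace α] {μ : Measure α} {S A : Set α}

theorem setIntegral_le_of_nonpos_on_of_nonneg_on_compl {h : α → ℝ} (hS : MeasurableSet S)
    (hA : MeasurableSet A) (hh : Integrable h μ) (h_nonpos : ∀ x ∈ S, h x ≤ 0)
    (h_nonneg : ∀ x ∉ S, 0 ≤ h x) :
    ∫ x in S, h x ∂μ ≤ ∫ x in A, h x ∂μ := by
  rw [← integral_indicator hS, ← integral_indicator hA]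
  refine integral_mono (hh.indicator hS) (hh.indicator hA) fun x => ?_
  by_cases hxS : x ∈ S <;> by_cases hxA : x ∈ A <;>
    simp [indicator_of_mem, indicator_of_notMem, hxS, hxA, h_nonpos, h_nonneg]

theorem setIntegral_le_of_le_mul_on_of_mul_le_on_compl {f g : α → ℝ} {t : ℝ}
    (hS : MeasurableSet S) (hA : MeasurableSet A) (hfi : Integrable f μ) (hgi : Integrable g μ)
    (hle : ∀ x ∈ S, g x ≤ t * f x) (hge : ∀ x ∉ S, t * f x ≤ g x)
    (hfA : ∫ x in A, f x ∂μ = ∫ x in S, f x ∂μ) :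
    ∫ x in S, g x ∂μ ≤ ∫ x in A, g x ∂μ := by
  have hdiff : Integrable (fun x => g x - t * f x) μ := hgi.sub (hfi.const_mul t)
  have key := setIntegral_le_of_nonpos_on_of_nonneg_on_compl hS hA hdiff
    (fun x hx => sub_nonpos.mpr (hle x hx)) (fun x hx => sub_nonneg.mpr (hge x hx))
  rw [integral_sub hgi.integrableOn (hfi.const_mul t).integrableOn,
    integral_sub hgi.integrableOn (hfi.const_mul t).integrableOn,
    integral_const_mul, integral_const_mul, hfA] at key
  linarith

end Bathtub

theorem constrained_min_general {𝓧 : Type*} [MeasurableSpace 𝓧]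
    (μ : Measure 𝓧) (f g : 𝓧 → ℝ) (c : ℝ)
    (hf : Measurable f) (hg : Measurable g)
    (hfi : Integrable f μ) (hgi : Integrable g μ)
    (t : ℝ)
    (M : Set 𝓧) (hM : MeasurableSet M) (hMsub : M ⊆ {x | g x = t * f x})
    (hAstar : ∫ x in ({x | g x < t * f x} ∪ M), f x ∂μ = c) :
    ∀ A : Set 𝓧, MeasurableSet A → (∫ x in A, f x ∂μ) = c →
      (∫ x in ({x | g x < t * f x} ∪ M), g x ∂μ) ≤ ∫ x in A, g x ∂μ := by
  intro A hA hAc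
  refine setIntegral_le_of_le_mul_on_of_mul_le_on_compl (t := t)
    ((measurableSet_lt hg (hf.const_mul t)).union hM) hA hfi hgi ?_ ?_ (hAc.trans hAstar.symm)
  · rintro x (hlt | hxM)
    · exact hlt.le
    · exact (hMsub hxM).le
  · intro x hx
    exact not_lt.mp fun hlt => hx (Or.inl hlt)

/-- Constrained minimization lemma: if `A* = {g < t·f} ∪ M` with `M ⊆ {g = t·f}`
satisfies `∫_{A*} f = c`, then `A*` minimizes `∫_A g` among all measurable sets `A`
with `∫_A f = c`. -/
theorem constrained_min {𝓧 : Type*} [MeasurableSpace 𝓧]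
    (μ : Measure 𝓧) (f g : 𝓧 → ℝ) (c : ℝ) (hc : 0 < c)
    (hf : Measurable f) (hg : Measurable g)
    (hf0 : ∀ x, 0 ≤ f x) (hg0 : ∀ x, 0 ≤ g x)
    (hfi : Integrable f μ) (hgi : Integrable g μ)
    (t : ℝ) (ht : 0 ≤ t)
    (M : Set 𝓧) (hM : MeasurableSet M) (hMsub : M ⊆ {x | g x = t * f x})
    (hAstar : ∫ x in ({x | g x < t * f x} ∪ M), f x ∂μ = c) :
    ∀ A : Set 𝓧, MeasurableSet A → (∫ x in A, f x ∂μ) = c →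
      (∫ x in ({x | g x < t * f x} ∪ M), g x ∂μ) ≤ ∫ x in A, g x ∂μ :=
  constrained_min_general μ f g c hf hg hfi hgi t M hM hMsub hAstar
end

section
/- Under the hypotheses of the constrained minimization lemma, if moreover for all t ≥ 0 the set {x : g(x) = t·f(x)} has μ-measure zero, then any minimizer A of ∫_A g over sets with ∫_A f = c satisfies, up to μ-null sets, {g < t_c f} ⊆ A ⊆ {g ≤ t_c f}. -/
/-!
With the multiplier `tc`, the constraint `∫_B f = c` turns minimality of `A` into
`∫_A (g - tc f) ≤ ∫_S (g - tc f)` for `S = {g < tc f}`. After cancelling `A ∩ S`, the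
integrand is `≥ 0` on `A \ S` and `< 0` on `S \ A`, so both remaining integrals vanish:
`S \ A` is null, and `g = tc f` almost everywhere on `A \ S`.
-/

open MeasureTheory Set

section

variable {X : Type*} [MeasurableSpace X] {μ : Measure X} {h : X → ℝ}

theorem measure_inter_setOf_pos_eq_zero_of_setIntegral_eq_zero {s : Set X}
    (hs : MeasurableSet s) (hi : IntegrableOn h s μ) (hnonneg : ∀ x ∈ s, 0 ≤ h x)
    (hzero : ∫ x in s, h x ∂μ = 0) : μ (s ∩ {x | 0 < h x}) = 0 := by
  have hsupp : μ (Function.support h ∩ s) = 0 := by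
    by_contra hne
    have := (setIntegral_pos_iff_support_of_nonneg_ae
      ((ae_restrict_iff' hs).mpr (ae_of_all μ hnonneg)) hi).mpr (pos_iff_ne_zero.mpr hne)
    exact this.ne' hzero
  refine measure_mono_null ?_ hsupp
  exact fun x hx => ⟨(show 0 < h x from hx.2).ne', hx.1⟩

theorem setIntegral_sub_setIntegral_eq_diff {A B : Set X} (hA : MeasurableSet A)
    (hB : MeasurableSet B) (hi : Integrable h μ) :
    ∫ x in A, h x ∂μ - ∫ x in B, h x ∂μ =
      ∫ x in A \ B, h x ∂μ - ∫ x in B \ A, h x ∂μ := by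
  have hA_split := integral_inter_add_sdiff hB (hi.integrableOn (s := A))
  have hB_split := integral_inter_add_sdiff hA (hi.integrableOn (s := B))
  rw [inter_comm] at hB_split
  linarith

theorem setOf_neg_ae_le_and_ae_le_setOf_nonpos (hm : Measurable h) (hi : Integrable h μ)
    {A : Set X} (hA : MeasurableSet A)
    (hmin : ∫ x in A, h x ∂μ ≤ ∫ x in {x | h x < 0}, h x ∂μ) :
    {x | h x < 0} ≤ᵐ[μ] A ∧ A ≤ᵐ[μ] {x | h x ≤ 0} := by
  set S := {x | h x < 0}
  have hS : MeasurableSet S := measurableSet_lt hm measurable_const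
  have hdiff := setIntegral_sub_setIntegral_eq_diff hA hS hi (μ := μ)
  have hAS_nonneg : 0 ≤ ∫ x in A \ S, h x ∂μ :=
    setIntegral_nonneg (hA.diff hS) fun x hx => not_lt.mp hx.2
  have hSA_nonpos : ∫ x in S \ A, h x ∂μ ≤ 0 :=
    setIntegral_nonpos (hS.diff hA) fun x hx => hx.1.le
  have hAS : ∫ x in A \ S, h x ∂μ = 0 := by linarith
  have hSA : ∫ x in S \ A, -h x ∂μ = 0 := by rw [integral_neg]; linarith
  constructor
  · refine ae_le_set.mpr (measure_mono_null ?_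
      (measure_inter_setOf_pos_eq_zero_of_setIntegral_eq_zero (hS.diff hA) hi.integrableOn.neg
        (fun x hx => (neg_pos.mpr hx.1).le) hSA))
    exact fun x hx => ⟨hx, show 0 < -h x from neg_pos.mpr hx.1⟩
  · refine ae_le_set.mpr (measure_mono_null ?_
      (measure_inter_setOf_pos_eq_zero_of_setIntegral_eq_zero (hA.diff hS) hi.integrableOn
        (fun x hx => not_lt.mp hx.2) hAS))
    exact fun x hx =>
      ⟨⟨hx.1, fun (hneg : h x < 0) => hx.2 hneg.le⟩, show 0 < h x from not_le.mp hx.2⟩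

end

theorem constrained_min_unique_general {𝓧 : Type*} [MeasurableSpace 𝓧]
    (μ : Measure 𝓧) (f g : 𝓧 → ℝ) (c : ℝ)
    (hf : Measurable f) (hg : Measurable g)
    (hfi : Integrable f μ) (hgi : Integrable g μ)
    (tc : ℝ)
    (hAstar : ∫ x in {x | g x < tc * f x}, f x ∂μ = c)
    (A : Set 𝓧) (hA : MeasurableSet A) (hAf : ∫ x in A, f x ∂μ = c)
    (hAmin : ∀ B : Set 𝓧, MeasurableSet B → (∫ x in B, f x ∂μ) = c →
      (∫ x in A, g x ∂μ) ≤ ∫ x in B, g x ∂μ) :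
    μ ({x | g x < tc * f x} \ A) = 0 ∧ μ (A \ {x | g x ≤ tc * f x}) = 0 := by
  have htcf : Integrable (fun x => tc * f x) μ := hfi.const_mul tc
  have hsplit : ∀ B : Set 𝓧, ∫ x in B, (g x - tc * f x) ∂μ =
      ∫ x in B, g x ∂μ - tc * ∫ x in B, f x ∂μ := fun B => by
    rw [integral_sub hgi.integrableOn htcf.integrableOn, integral_const_mul]
  have hmin : ∫ x in A, (g x - tc * f x) ∂μ ≤
      ∫ x in {x | g x - tc * f x < 0}, (g x - tc * f x) ∂μ := by
    simp only [sub_neg, hsplit, hAf, hAstar]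
    linarith [hAmin _ (measurableSet_lt hg (hf.const_mul tc)) hAstar]
  have key := setOf_neg_ae_le_and_ae_le_setOf_nonpos (h := fun x => g x - tc * f x)
    (hg.sub (hf.const_mul tc)) (hgi.sub htcf) hA hmin
  simpa only [sub_neg, sub_nonpos, ae_le_set] using key

/-- Uniqueness part of the constrained minimization lemma: if for all `t ≥ 0` the set
`{g = t·f}` is `μ`-null, `t_c ≥ 0` is such that `A* = {g < t_c·f}` satisfies
`∫_{A*} f = c`, then any measurable minimizer `A` of `∫_A g` over sets with
`∫_A f = c` satisfies, up to `μ`-null sets, `{g < t_c f} ⊆ A ⊆ {g ≤ t_c f}`. -/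
theorem constrained_min_unique {𝓧 : Type*} [MeasurableSpace 𝓧]
    (μ : Measure 𝓧) (f g : 𝓧 → ℝ) (c : ℝ) (hc : 0 < c)
    (hf : Measurable f) (hg : Measurable g)
    (hf0 : ∀ x, 0 ≤ f x) (hg0 : ∀ x, 0 ≤ g x)
    (hfi : Integrable f μ) (hgi : Integrable g μ)
    (hnull : ∀ t : ℝ, 0 ≤ t → μ {x | g x = t * f x} = 0)
    (tc : ℝ) (htc : 0 ≤ tc)
    (hAstar : ∫ x in {x | g x < tc * f x}, f x ∂μ = c)
    (A : Set 𝓧) (hA : MeasurableSet A) (hAf : ∫ x in A, f x ∂μ = c)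
    (hAmin : ∀ B : Set 𝓧, MeasurableSet B → (∫ x in B, f x ∂μ) = c →
      (∫ x in A, g x ∂μ) ≤ ∫ x in B, g x ∂μ) :
    μ ({x | g x < tc * f x} \ A) = 0 ∧ μ (A \ {x | g x ≤ tc * f x}) = 0 :=
  constrained_min_unique_general μ f g c hf hg hfi hgi tc hAstar A hA hAf hAmin
end

section
/- For every indecision level γ ∈ [0,1), the classifier Y*_γ that abstains on the optimal indecision region Θ_γ and otherwise outputs argmax_i p_i f_i(X) achieves conditional risk P(Y*_γ ≠ Y | Y*_γ ≠ 0) = (∫_{Θ_γ^c} min(p₁f₁, p₂f₂) dμ)/(1-γ), and this value is minimal among all classifiers Ỹ taking values in {0,1,2} with P(Ỹ = 0) = γ. -/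
/-!
Write `gᵢ = pᵢ fᵢ`. A classifier that does not abstain on a set `S` errs with mass at least
`∫_S min(g₁, g₂)`, with equality for the plug-in rule `argmax gᵢ`. Off `Θ_γ` one has
`min(g₁, g₂) ≤ (1 - τ)(g₁ + g₂)` and on `Θ_γ` the reverse inequality, so `Θ_γᶜ` minimises
`∫_S min(g₁, g₂)` among all sets `S` of mixture mass `1 - γ` (bathtub principle).
-/

open MeasureTheory Set
open scoped Classical

/-- Conditional misclassification risk `P(h ≠ Y | h ≠ 0)` of a selective classifier
`h : 𝓧 → {0,1,2}` in the binary mixture model with priors `p₁, p₂` and class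
densities `f₁, f₂` w.r.t. `μ`. -/
noncomputable def condRisk {𝓧 : Type*} [MeasurableSpace 𝓧]
    (μ : Measure 𝓧) (f₁ f₂ : 𝓧 → ℝ) (p₁ p₂ : ℝ) (h : 𝓧 → ℕ) : ℝ :=
  ((∫ x in {x | h x = 2}, p₁ * f₁ x ∂μ) + ∫ x in {x | h x = 1}, p₂ * f₂ x ∂μ) /
    ∫ x in {x | h x ≠ 0}, (p₁ * f₁ x + p₂ * f₂ x) ∂μ

theorem setOf_ne_zero_eq_compl_of_plugin {α : Type*} {g₁ g₂ : α → ℝ} {h : α → ℕ} {Θ : Set α}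
    (hh : ∀ x, h x = if x ∈ Θ then 0 else if g₂ x ≤ g₁ x then 1 else 2) :
    {x | h x ≠ 0} = Θᶜ := by
  ext x
  simp only [mem_ofPred_eq, hh x, mem_compl_iff]
  split_ifs <;> simp_all

section SetIntegral

variable {α : Type*} [MeasurableSpace α] {μ : Measure α}

theorem setIntegral_le_setIntegral_of_nonpos_of_nonneg_compl {φ : α → ℝ} {s t : Set α}
    (hφ : Integrable φ μ) (hs : MeasurableSet s) (ht : MeasurableSet t)
    (hneg : ∀ x ∈ s, φ x ≤ 0) (hpos : ∀ x ∉ s, 0 ≤ φ x) :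
    ∫ x in s, φ x ∂μ ≤ ∫ x in t, φ x ∂μ := by
  rw [← integral_indicator hs, ← integral_indicator ht]
  refine integral_mono (hφ.indicator hs) (hφ.indicator ht) fun x => ?_
  by_cases hxs : x ∈ s <;> by_cases hxt : x ∈ t <;>
    simp [indicator_of_mem, indicator_of_notMem, hxs, hxt, hneg, hpos]

theorem setIntegral_le_setIntegral_of_setIntegral_eq {g m : α → ℝ} {s t : Set α} (c : ℝ)
    (hg : Integrable g μ) (hm : Integrable m μ) (hs : MeasurableSet s) (ht : MeasurableSet t)
    (hmass : ∫ x in s, g x ∂μ = ∫ x in t, g x ∂μ)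
    (hle : ∀ x ∈ s, m x ≤ c * g x) (hge : ∀ x ∉ s, c * g x ≤ m x) :
    ∫ x in s, m x ∂μ ≤ ∫ x in t, m x ∂μ := by
  have hφ : Integrable (fun x => m x - c * g x) μ := hm.sub (hg.const_mul c)
  have key := setIntegral_le_setIntegral_of_nonpos_of_nonneg_compl hφ hs ht
    (fun x hx => sub_nonpos.2 (hle x hx)) (fun x hx => sub_nonneg.2 (hge x hx))
  rw [integral_sub hm.integrableOn (hg.const_mul c).integrableOn,
    integral_sub hm.integrableOn (hg.const_mul c).integrableOn,
    integral_const_mul, integral_const_mul, hmass] at key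
  linarith

theorem setIntegral_ne_zero_eq_add {h : α → ℕ} (hh : Measurable h) (h2 : ∀ x, h x ≤ 2)
    {φ : α → ℝ} (hφ : Integrable φ μ) :
    ∫ x in {x | h x ≠ 0}, φ x ∂μ =
      (∫ x in {x | h x = 1}, φ x ∂μ) + ∫ x in {x | h x = 2}, φ x ∂μ := by
  have hunion : {x | h x ≠ 0} = {x | h x = 1} ∪ {x | h x = 2} := by
    ext x
    have := h2 x
    simp only [mem_ofPred_eq, mem_union]
    omega
  have hdisj : Disjoint {x | h x = 1} {x | h x = 2} :=
    disjoint_left.2 fun x h1 h2 => by simp_all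
  rw [hunion]
  exact setIntegral_union hdisj (hh (measurableSet_singleton 2)) hφ.integrableOn hφ.integrableOn

variable {g₁ g₂ : α → ℝ} {h : α → ℕ}

theorem setIntegral_min_le_misclassification (hg₁ : Integrable g₁ μ) (hg₂ : Integrable g₂ μ)
    (hh : Measurable h) (h2 : ∀ x, h x ≤ 2) :
    ∫ x in {x | h x ≠ 0}, min (g₁ x) (g₂ x) ∂μ ≤
      (∫ x in {x | h x = 2}, g₁ x ∂μ) + ∫ x in {x | h x = 1}, g₂ x ∂μ := by
  have hm : Integrable (fun x => min (g₁ x) (g₂ x)) μ := hg₁.inf hg₂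
  rw [setIntegral_ne_zero_eq_add hh h2 hm, add_comm]
  exact add_le_add
    (setIntegral_mono hm.integrableOn hg₁.integrableOn fun x => min_le_left _ _)
    (setIntegral_mono hm.integrableOn hg₂.integrableOn fun x => min_le_right _ _)

theorem misclassification_eq_setIntegral_min (hg₁ : Integrable g₁ μ) (hg₂ : Integrable g₂ μ)
    (hh : Measurable h) (h2 : ∀ x, h x ≤ 2)
    (hargmax₁ : ∀ x, h x = 1 → g₂ x ≤ g₁ x) (hargmax₂ : ∀ x, h x = 2 → g₁ x ≤ g₂ x) :
    (∫ x in {x | h x = 2}, g₁ x ∂μ) + ∫ x in {x | h x = 1}, g₂ x ∂μ =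
      ∫ x in {x | h x ≠ 0}, min (g₁ x) (g₂ x) ∂μ := by
  have hm : Integrable (fun x => min (g₁ x) (g₂ x)) μ := hg₁.inf hg₂
  rw [setIntegral_ne_zero_eq_add hh h2 hm, add_comm]
  congr 1
  · exact setIntegral_congr_fun (hh (measurableSet_singleton 1))
      fun x hx => (min_eq_right (hargmax₁ x hx)).symm
  · exact setIntegral_congr_fun (hh (measurableSet_singleton 2))
      fun x hx => (min_eq_left (hargmax₂ x hx)).symm

theorem setIntegral_compl_min_le_misclassification {Θ : Set α} (c : ℝ)
    (hg₁ : Integrable g₁ μ) (hg₂ : Integrable g₂ μ) (hΘ : MeasurableSet Θ)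
    (hh : Measurable h) (h2 : ∀ x, h x ≤ 2)
    (hmass : ∫ x in Θ, (g₁ x + g₂ x) ∂μ = ∫ x in {x | h x = 0}, (g₁ x + g₂ x) ∂μ)
    (hin : ∀ x ∈ Θ, c * (g₁ x + g₂ x) ≤ min (g₁ x) (g₂ x))
    (hout : ∀ x ∉ Θ, min (g₁ x) (g₂ x) ≤ c * (g₁ x + g₂ x)) :
    ∫ x in Θᶜ, min (g₁ x) (g₂ x) ∂μ ≤
      (∫ x in {x | h x = 2}, g₁ x ∂μ) + ∫ x in {x | h x = 1}, g₂ x ∂μ := by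
  have hh0 : MeasurableSet {x | h x = 0} := hh (measurableSet_singleton 0)
  have hg : Integrable (fun x => g₁ x + g₂ x) μ := hg₁.add hg₂
  calc ∫ x in Θᶜ, min (g₁ x) (g₂ x) ∂μ
      ≤ ∫ x in {x | h x = 0}ᶜ, min (g₁ x) (g₂ x) ∂μ :=
        setIntegral_le_setIntegral_of_setIntegral_eq c hg (hg₁.inf hg₂) hΘ.compl hh0.compl
          (by rw [setIntegral_compl hΘ hg, setIntegral_compl hh0 hg, hmass])
          hout fun x hx => hin x (not_not.1 hx)
    _ ≤ _ := setIntegral_min_le_misclassification hg₁ hg₂ hh h2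

variable {Θ : Set α}

theorem misclassification_eq_setIntegral_compl_min_of_plugin
    (hg₁m : Measurable g₁) (hg₂m : Measurable g₂) (hg₁ : Integrable g₁ μ) (hg₂ : Integrable g₂ μ)
    (hΘ : MeasurableSet Θ)
    (hh : ∀ x, h x = if x ∈ Θ then 0 else if g₂ x ≤ g₁ x then 1 else 2) :
    (∫ x in {x | h x = 2}, g₁ x ∂μ) + ∫ x in {x | h x = 1}, g₂ x ∂μ =
      ∫ x in Θᶜ, min (g₁ x) (g₂ x) ∂μ := by
  have hhm : Measurable h := by
    rw [funext hh]
    exact Measurable.ite hΘ measurable_const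
      (Measurable.ite (measurableSet_le hg₂m hg₁m) measurable_const measurable_const)
  rw [misclassification_eq_setIntegral_min hg₁ hg₂ hhm, setOf_ne_zero_eq_compl_of_plugin hh]
  · intro x
    rw [hh x]
    split_ifs <;> simp
  · intro x hx
    rw [hh x] at hx
    split_ifs at hx <;> omega
  · intro x hx
    rw [hh x] at hx
    split_ifs at hx with hxΘ hle <;> first | omega | exact (not_le.1 hle).le

end SetIntegral

theorem mul_add_le_min_of_div_mem_Icc {a b τ : ℝ} (ha : 0 ≤ a) (hb : 0 ≤ b)
    (h : a / (a + b) ∈ Icc (1 - τ) τ) : (1 - τ) * (a + b) ≤ min a b := by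
  rcases (add_nonneg ha hb).eq_or_lt with hab | hab
  · simp [show a = 0 by linarith, show b = 0 by linarith]
  · rw [mem_Icc, le_div_iff₀ hab, div_le_iff₀ hab] at h
    exact le_min h.1 (by linarith [h.2])

theorem min_le_mul_add_of_div_notMem_Ioo {a b τ : ℝ} (ha : 0 ≤ a) (hb : 0 ≤ b)
    (h : a / (a + b) ∉ Ioo (1 - τ) τ) : min a b ≤ (1 - τ) * (a + b) := by
  rcases (add_nonneg ha hb).eq_or_lt with hab | hab
  · simp [show a = 0 by linarith, show b = 0 by linarith]
  · rw [mem_Ioo, not_and_or, not_lt, not_lt, div_le_iff₀ hab, le_div_iff₀ hab] at h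
    rcases h with h | h
    · exact (min_le_left a b).trans h
    · exact (min_le_right a b).trans (by linarith)

theorem mem_Icc_of_mem_union_max_eq {α : Type*} {η : α → ℝ} {τ : ℝ} {M : Set α}
    (hM : M ⊆ {x | max (η x) (1 - η x) = τ}) {x : α}
    (hx : x ∈ {x | 1 - τ < η x ∧ η x < τ} ∪ M) : η x ∈ Icc (1 - τ) τ := by
  rcases hx with ⟨hlo, hhi⟩ | hxM
  · exact ⟨hlo.le, hhi.le⟩
  · have hmax : max (η x) (1 - η x) = τ := hM hxM
    exact ⟨by linarith [le_max_right (η x) (1 - η x)], hmax ▸ le_max_left _ _⟩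

theorem selective_bayes_optimal_general {𝓧 : Type*} [MeasurableSpace 𝓧]
    (μ : Measure 𝓧) (f₁ f₂ : 𝓧 → ℝ) (p₁ p₂ : ℝ) (γ : ℝ) (hγ : γ ∈ Ico (0 : ℝ) 1)
    (hf₁ : Measurable f₁) (hf₂ : Measurable f₂)
    (hf₁0 : ∀ x, 0 ≤ f₁ x) (hf₂0 : ∀ x, 0 ≤ f₂ x)
    (hp₁ : 0 ≤ p₁) (hp₂ : 0 ≤ p₂)
    (hf₁int : Integrable f₁ μ) (hf₂int : Integrable f₂ μ)
    (hdens : ∫ x, (p₁ * f₁ x + p₂ * f₂ x) ∂μ = 1)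
    (η : 𝓧 → ℝ) (hη : ∀ x, η x = p₁ * f₁ x / (p₁ * f₁ x + p₂ * f₂ x))
    (τ : ℝ)
    (M : Set 𝓧) (hMmeas : MeasurableSet M)
    (hMsub : M ⊆ {x | max (η x) (1 - η x) = τ})
    (Θ : Set 𝓧) (hΘ : Θ = {x | 1 - τ < η x ∧ η x < τ} ∪ M)
    (hΘγ : ∫ x in Θ, (p₁ * f₁ x + p₂ * f₂ x) ∂μ = γ)
    (Ystar : 𝓧 → ℕ)
    (hYstar : ∀ x, Ystar x = if x ∈ Θ then 0 else if p₂ * f₂ x ≤ p₁ * f₁ x then 1 else 2) :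
    condRisk μ f₁ f₂ p₁ p₂ Ystar =
      (∫ x in Θᶜ, min (p₁ * f₁ x) (p₂ * f₂ x) ∂μ) / (1 - γ) ∧
    ∀ h : 𝓧 → ℕ, Measurable h → (∀ x, h x ≤ 2) →
      (∫ x in {x | h x = 0}, (p₁ * f₁ x + p₂ * f₂ x) ∂μ) = γ →
      condRisk μ f₁ f₂ p₁ p₂ Ystar ≤ condRisk μ f₁ f₂ p₁ p₂ h := by
  have hg₁m : Measurable fun x => p₁ * f₁ x := hf₁.const_mul p₁
  have hg₂m : Measurable fun x => p₂ * f₂ x := hf₂.const_mul p₂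
  have hg₁ : Integrable (fun x => p₁ * f₁ x) μ := hf₁int.const_mul p₁
  have hg₂ : Integrable (fun x => p₂ * f₂ x) μ := hf₂int.const_mul p₂
  have hg : Integrable (fun x => p₁ * f₁ x + p₂ * f₂ x) μ := hg₁.add hg₂
  have hΘm : MeasurableSet Θ := by
    have hηm : Measurable η := funext hη ▸ hg₁m.div (hg₁m.add hg₂m)
    exact hΘ ▸ ((measurableSet_lt measurable_const hηm).inter
      (measurableSet_lt hηm measurable_const)).union hMmeas
  have hcompl : ∀ s, MeasurableSet s → ∫ x in s, (p₁ * f₁ x + p₂ * f₂ x) ∂μ = γ →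
      ∫ x in sᶜ, (p₁ * f₁ x + p₂ * f₂ x) ∂μ = 1 - γ := fun s hs hsγ => by
    rw [setIntegral_compl hs hg, hdens, hsγ]
  have hrisk : condRisk μ f₁ f₂ p₁ p₂ Ystar =
      (∫ x in Θᶜ, min (p₁ * f₁ x) (p₂ * f₂ x) ∂μ) / (1 - γ) := by
    rw [condRisk, misclassification_eq_setIntegral_compl_min_of_plugin hg₁m hg₂m hg₁ hg₂ hΘm hYstar,
      setOf_ne_zero_eq_compl_of_plugin hYstar, hcompl Θ hΘm hΘγ]
  refine ⟨hrisk, fun h hh h2 hhγ => ?_⟩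
  have hh0 : MeasurableSet {x | h x = 0} := hh (measurableSet_singleton 0)
  rw [hrisk, condRisk, show {x | h x ≠ 0} = {x | h x = 0}ᶜ from rfl, hcompl _ hh0 hhγ]
  gcongr
  · linarith [hγ.2]
  refine setIntegral_compl_min_le_misclassification (1 - τ) hg₁ hg₂ hΘm hh h2
    (hΘγ.trans hhγ.symm) (fun x hx => ?_) (fun x hx => ?_)
  · refine mul_add_le_min_of_div_mem_Icc (mul_nonneg hp₁ (hf₁0 x)) (mul_nonneg hp₂ (hf₂0 x)) ?_
    exact hη x ▸ mem_Icc_of_mem_union_max_eq hMsub (hΘ ▸ hx)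
  · refine min_le_mul_add_of_div_notMem_Ioo (mul_nonneg hp₁ (hf₁0 x)) (mul_nonneg hp₂ (hf₂0 x)) ?_
    rw [← hη x]
    exact fun hxΘ => hx (hΘ ▸ Or.inl hxΘ)

/-- For indecision level `γ ∈ [0,1)`, the classifier abstaining on the optimal
indecision region `Θ_γ` and otherwise outputting `argmax_i p_i f_i(X)` achieves
conditional risk `(∫_{Θ_γᶜ} min(p₁f₁,p₂f₂) dμ)/(1-γ)`, which is minimal among all
selective classifiers with abstention probability `γ`. -/
theorem selective_bayes_optimal {𝓧 : Type*} [MeasurableSpace 𝓧]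
    (μ : Measure 𝓧) (f₁ f₂ : 𝓧 → ℝ) (p₁ p₂ : ℝ) (γ : ℝ) (hγ : γ ∈ Ico (0 : ℝ) 1)
    (hf₁ : Measurable f₁) (hf₂ : Measurable f₂)
    (hf₁0 : ∀ x, 0 ≤ f₁ x) (hf₂0 : ∀ x, 0 ≤ f₂ x)
    (hp₁ : 0 ≤ p₁) (hp₂ : 0 ≤ p₂) (hpsum : p₁ + p₂ = 1)
    (hf₁int : Integrable f₁ μ) (hf₂int : Integrable f₂ μ)
    (hdens : ∫ x, (p₁ * f₁ x + p₂ * f₂ x) ∂μ = 1)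
    (η : 𝓧 → ℝ) (hη : ∀ x, η x = p₁ * f₁ x / (p₁ * f₁ x + p₂ * f₂ x))
    (τ : ℝ) (hτ : τ ∈ Icc (1 / 2 : ℝ) 1)
    (M : Set 𝓧) (hMmeas : MeasurableSet M)
    (hMsub : M ⊆ {x | max (η x) (1 - η x) = τ})
    (Θ : Set 𝓧) (hΘ : Θ = {x | 1 - τ < η x ∧ η x < τ} ∪ M)
    (hΘγ : ∫ x in Θ, (p₁ * f₁ x + p₂ * f₂ x) ∂μ = γ)
    (Ystar : 𝓧 → ℕ)
    (hYstar : ∀ x, Ystar x = if x ∈ Θ then 0 else if p₂ * f₂ x ≤ p₁ * f₁ x then 1 else 2) :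
    condRisk μ f₁ f₂ p₁ p₂ Ystar =
      (∫ x in Θᶜ, min (p₁ * f₁ x) (p₂ * f₂ x) ∂μ) / (1 - γ) ∧
    ∀ h : 𝓧 → ℕ, Measurable h → (∀ x, h x ≤ 2) →
      (∫ x in {x | h x = 0}, (p₁ * f₁ x + p₂ * f₂ x) ∂μ) = γ →
      condRisk μ f₁ f₂ p₁ p₂ Ystar ≤ condRisk μ f₁ f₂ p₁ p₂ h :=
  selective_bayes_optimal_general μ f₁ f₂ p₁ p₂ γ hγ hf₁ hf₂ hf₁0 hf₂0 hp₁ hp₂ hf₁int hf₂int hdens η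
    hη τ M hMmeas hMsub Θ hΘ hΘγ Ystar hYstar
end

section
/- The minimax conditional risk satisfies ℛ(γ) = E[Z | Z < 1-τ_γ or Z ∈ M_γ], where Z = min(η(X), 1-η(X)). -/
open MeasureTheory Set
open scoped Classical

/-- Minimax conditional risk at indecision level `γ`: infimum of the conditional risk
over all measurable selective classifiers `h : 𝓧 → {0,1,2}` with `P(h = 0) = γ`. -/
noncomputable def minimaxRisk {𝓧 : Type*} [MeasurableSpace 𝓧]
    (μ : Measure 𝓧) (f₁ f₂ : 𝓧 → ℝ) (p₁ p₂ : ℝ) (γ : ℝ) : ℝ :=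
  sInf {r | ∃ h : 𝓧 → ℕ, Measurable h ∧ (∀ x, h x ≤ 2) ∧
    (∫ x in {x | h x = 0}, (p₁ * f₁ x + p₂ * f₂ x) ∂μ) = γ ∧
    r = condRisk μ f₁ f₂ p₁ p₂ h}

/-- Level-set swapping: if `A` and `B` have the same `D`-mass, `Z ≥ c` on `A \ B` and
`Z ≤ c` on `B \ A`, then `∫_B Z·D ≤ ∫_A Z·D`. -/
private lemma swap_le {𝓧 : Type*} [MeasurableSpace 𝓧] (μ : Measure 𝓧) (D Z : 𝓧 → ℝ)
    (hDint : Integrable D μ) (hZDint : Integrable (fun x => Z x * D x) μ)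
    (hD0 : ∀ x, 0 ≤ D x) (c : ℝ) (A B : Set 𝓧) (hA : MeasurableSet A) (hB : MeasurableSet B)
    (hAB : ∫ x in A, D x ∂μ = ∫ x in B, D x ∂μ)
    (hAc : ∀ x ∈ A \ B, c ≤ Z x) (hBc : ∀ x ∈ B \ A, Z x ≤ c) :
    ∫ x in B, Z x * D x ∂μ ≤ ∫ x in A, Z x * D x ∂μ := by
  have hsplitA : ∀ f : 𝓧 → ℝ, Integrable f μ →
      ∫ x in A, f x ∂μ = (∫ x in A ∩ B, f x ∂μ) + ∫ x in A \ B, f x ∂μ := fun f hf =>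
    (integral_inter_add_diff hB hf.integrableOn).symm
  have hsplitB : ∀ f : 𝓧 → ℝ, Integrable f μ →
      ∫ x in B, f x ∂μ = (∫ x in B ∩ A, f x ∂μ) + ∫ x in B \ A, f x ∂μ := fun f hf =>
    (integral_inter_add_diff hA hf.integrableOn).symm
  have hinter : B ∩ A = A ∩ B := Set.inter_comm B A
  have hDdiff : ∫ x in A \ B, D x ∂μ = ∫ x in B \ A, D x ∂μ := by
    have h1 := hsplitA D hDint
    have h2 := hsplitB D hDint
    rw [hinter] at h2
    linarith
  have hmAB : MeasurableSet (A \ B) := hA.diff hB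
  have hmBA : MeasurableSet (B \ A) := hB.diff hA
  have h1 : ∫ x in B \ A, Z x * D x ∂μ ≤ c * ∫ x in B \ A, D x ∂μ := by
    rw [← integral_const_mul]
    exact setIntegral_mono_on hZDint.integrableOn ((hDint.const_mul c).integrableOn) hmBA
      (fun x hx => mul_le_mul_of_nonneg_right (hBc x hx) (hD0 x))
  have h2 : c * ∫ x in A \ B, D x ∂μ ≤ ∫ x in A \ B, Z x * D x ∂μ := by
    rw [← integral_const_mul]
    exact setIntegral_mono_on ((hDint.const_mul c).integrableOn) hZDint.integrableOn hmAB
      (fun x hx => mul_le_mul_of_nonneg_right (hAc x hx) (hD0 x))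
  have hA' := hsplitA (fun x => Z x * D x) hZDint
  have hB' := hsplitB (fun x => Z x * D x) hZDint
  rw [hinter] at hB'
  rw [hDdiff] at h2
  linarith

/-- `ℛ(γ) = E[Z | Z < 1-τ_γ or Z ∈ 𝓜_γ]` where `Z = min(η(X), 1-η(X))`, the decision
region being `{Z < 1-τ_γ} ∪ ({Z = 1-τ_γ} \ M_γ)` (the complement of the optimal
indecision region `Θ_γ = {Z > 1-τ_γ} ∪ M_γ`), and the expectation is under the
mixture law of `X` (density `p₁f₁ + p₂f₂` w.r.t. `μ`). -/
theorem minimax_risk_cond_expectation {𝓧 : Type*} [MeasurableSpace 𝓧]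
    (μ : Measure 𝓧) (f₁ f₂ : 𝓧 → ℝ) (p₁ p₂ : ℝ) (γ : ℝ) (hγ : γ ∈ Ico (0 : ℝ) 1)
    (hf₁ : Measurable f₁) (hf₂ : Measurable f₂)
    (hf₁0 : ∀ x, 0 ≤ f₁ x) (hf₂0 : ∀ x, 0 ≤ f₂ x)
    (hp₁ : 0 ≤ p₁) (hp₂ : 0 ≤ p₂) (hpsum : p₁ + p₂ = 1)
    (hf₁int : Integrable f₁ μ) (hf₂int : Integrable f₂ μ)
    (hdens : ∫ x, (p₁ * f₁ x + p₂ * f₂ x) ∂μ = 1)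
    (η : 𝓧 → ℝ) (hη : ∀ x, η x = p₁ * f₁ x / (p₁ * f₁ x + p₂ * f₂ x))
    (Z : 𝓧 → ℝ) (hZ : ∀ x, Z x = min (η x) (1 - η x))
    (τ : ℝ) (hτ : τ ∈ Icc (1 / 2 : ℝ) 1)
    (M : Set 𝓧) (hMmeas : MeasurableSet M) (hMsub : M ⊆ {x | Z x = 1 - τ})
    (hΘγ : ∫ x in ({x | 1 - τ < Z x} ∪ M), (p₁ * f₁ x + p₂ * f₂ x) ∂μ = γ) :
    minimaxRisk μ f₁ f₂ p₁ p₂ γ =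
      (∫ x in ({x | Z x < 1 - τ} ∪ ({x | Z x = 1 - τ} \ M)),
          Z x * (p₁ * f₁ x + p₂ * f₂ x) ∂μ) /
      (∫ x in ({x | Z x < 1 - τ} ∪ ({x | Z x = 1 - τ} \ M)),
          (p₁ * f₁ x + p₂ * f₂ x) ∂μ) := by
  obtain ⟨hγ0, hγ1⟩ := hγ
  set c : ℝ := 1 - τ with hc
  -- basic facts about the density D
  have hD0 : ∀ x, 0 ≤ p₁ * f₁ x + p₂ * f₂ x := fun x =>
    add_nonneg (mul_nonneg hp₁ (hf₁0 x)) (mul_nonneg hp₂ (hf₂0 x))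
  have hDmeas : Measurable fun x => p₁ * f₁ x + p₂ * f₂ x :=
    (hf₁.const_mul p₁).add (hf₂.const_mul p₂)
  have hDint : Integrable (fun x => p₁ * f₁ x + p₂ * f₂ x) μ :=
    (hf₁int.const_mul p₁).add (hf₂int.const_mul p₂)
  have hη0 : ∀ x, 0 ≤ η x := fun x => by
    rw [hη]; exact div_nonneg (mul_nonneg hp₁ (hf₁0 x)) (hD0 x)
  have hη1 : ∀ x, η x ≤ 1 := fun x => by
    rw [hη]
    exact div_le_one_of_le₀ (le_add_of_nonneg_right (mul_nonneg hp₂ (hf₂0 x))) (hD0 x)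
  have hηmeas : Measurable η := by
    have h : η = fun x => p₁ * f₁ x / (p₁ * f₁ x + p₂ * f₂ x) := funext hη
    rw [h]; exact (hf₁.const_mul p₁).div hDmeas
  have hZmeas : Measurable Z := by
    have h : Z = fun x => min (η x) (1 - η x) := funext hZ
    rw [h]; exact hηmeas.min (measurable_const.sub hηmeas)
  have hZ0 : ∀ x, 0 ≤ Z x := fun x => by
    rw [hZ]; exact le_min (hη0 x) (by linarith [hη1 x])
  have hZle : ∀ x, Z x ≤ 1 := fun x => by
    rw [hZ]; exact le_trans (min_le_left _ _) (hη1 x)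
  have hZDint : Integrable (fun x => Z x * (p₁ * f₁ x + p₂ * f₂ x)) μ :=
    hDint.bdd_mul hZmeas.aestronglyMeasurable
      (c := 1) (Filter.Eventually.of_forall fun x => by rw [Real.norm_eq_abs, abs_le]; constructor <;> linarith [hZ0 x, hZle x])
  have hηD : ∀ x, η x * (p₁ * f₁ x + p₂ * f₂ x) = p₁ * f₁ x := by
    intro x
    rcases eq_or_ne (p₁ * f₁ x + p₂ * f₂ x) 0 with h0 | h0
    · have h1 : p₁ * f₁ x = 0 := by
        nlinarith [mul_nonneg hp₂ (hf₂0 x), mul_nonneg hp₁ (hf₁0 x)]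
      rw [h0, h1, mul_zero]
    · rw [hη]; field_simp
  have hη'D : ∀ x, (1 - η x) * (p₁ * f₁ x + p₂ * f₂ x) = p₂ * f₂ x := by
    intro x
    have := hηD x
    nlinarith [this]
  have hZD1 : ∀ x, Z x * (p₁ * f₁ x + p₂ * f₂ x) ≤ p₁ * f₁ x := by
    intro x
    have h1 : Z x ≤ η x := by rw [hZ]; exact min_le_left _ _
    calc Z x * (p₁ * f₁ x + p₂ * f₂ x) ≤ η x * (p₁ * f₁ x + p₂ * f₂ x) :=
          mul_le_mul_of_nonneg_right h1 (hD0 x)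
      _ = p₁ * f₁ x := hηD x
  have hZD2 : ∀ x, Z x * (p₁ * f₁ x + p₂ * f₂ x) ≤ p₂ * f₂ x := by
    intro x
    have h1 : Z x ≤ 1 - η x := by rw [hZ]; exact min_le_right _ _
    calc Z x * (p₁ * f₁ x + p₂ * f₂ x) ≤ (1 - η x) * (p₁ * f₁ x + p₂ * f₂ x) :=
          mul_le_mul_of_nonneg_right h1 (hD0 x)
      _ = p₂ * f₂ x := hη'D x
  -- the indecision region
  set Θ : Set 𝓧 := {x | c < Z x} ∪ M with hΘdef
  have hΘmeas : MeasurableSet Θ := (measurableSet_lt measurable_const hZmeas).union hMmeas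
  have hRΘ : ({x | Z x < c} ∪ ({x | Z x = c} \ M)) = Θᶜ := by
    ext x
    simp only [hΘdef, mem_union, mem_compl_iff, mem_setOf_eq, mem_diff]
    constructor
    · rintro (h | ⟨h, hM⟩) <;> rintro (h' | h')
      · linarith
      · have := hMsub h'; simp only [mem_setOf_eq] at this; linarith
      · linarith
      · exact hM h'
    · intro hx
      push_neg at hx
      rcases lt_or_eq_of_le hx.1 with h | h
      · exact Or.inl h
      · exact Or.inr ⟨h, hx.2⟩
  have hΘc_le : ∀ x ∈ Θᶜ, Z x ≤ c := by
    intro x hx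
    rw [hΘdef] at hx
    simp only [mem_compl_iff, mem_union, mem_setOf_eq] at hx
    push_neg at hx
    exact hx.1
  have hΘ_ge : ∀ x ∈ Θ, c ≤ Z x := by
    intro x hx
    rw [hΘdef] at hx
    rcases hx with h | h
    · exact le_of_lt h
    · have := hMsub h; simp only [mem_setOf_eq] at this; linarith
  have hΘcD : ∫ x in Θᶜ, (p₁ * f₁ x + p₂ * f₂ x) ∂μ = 1 - γ := by
    have h := integral_add_compl hΘmeas hDint
    rw [hdens] at h
    have hΘγ' : ∫ x in Θ, (p₁ * f₁ x + p₂ * f₂ x) ∂μ = γ := hΘγ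
    linarith
  have hpos : (0 : ℝ) < 1 - γ := by linarith
  -- the key bound for an arbitrary feasible classifier
  have key : ∀ h : 𝓧 → ℕ, Measurable h → (∀ x, h x ≤ 2) →
      (∫ x in {x | h x = 0}, (p₁ * f₁ x + p₂ * f₂ x) ∂μ) = γ →
      ((∫ x in Θᶜ, Z x * (p₁ * f₁ x + p₂ * f₂ x) ∂μ) ≤
        (∫ x in {x | h x = 2}, p₁ * f₁ x ∂μ) + ∫ x in {x | h x = 1}, p₂ * f₂ x ∂μ)
      ∧ (∫ x in {x | h x ≠ 0}, (p₁ * f₁ x + p₂ * f₂ x) ∂μ) = 1 - γ := by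
    intro h hm hle2 hcon
    have hs0 : MeasurableSet {x | h x = 0} := hm (measurableSet_singleton 0)
    have hs1 : MeasurableSet {x | h x = 1} := hm (measurableSet_singleton 1)
    have hs2 : MeasurableSet {x | h x = 2} := hm (measurableSet_singleton 2)
    have hne : {x | h x ≠ 0} = {x | h x = 0}ᶜ := rfl
    have hdenom : (∫ x in {x | h x ≠ 0}, (p₁ * f₁ x + p₂ * f₂ x) ∂μ) = 1 - γ := by
      have h' := integral_add_compl hs0 hDint
      rw [hdens, hcon] at h'
      rw [hne]; linarith
    refine ⟨?_, hdenom⟩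
    have hsplit : {x | h x ≠ 0} = {x | h x = 1} ∪ {x | h x = 2} := by
      ext x
      simp only [mem_setOf_eq, mem_union]
      have := hle2 x
      omega
    have hdisj : Disjoint {x | h x = 1} {x | h x = 2} := by
      rw [Set.disjoint_left]
      intro x hx1 hx2
      simp only [mem_setOf_eq] at hx1 hx2
      omega
    have hZD_union : ∫ x in {x | h x ≠ 0}, Z x * (p₁ * f₁ x + p₂ * f₂ x) ∂μ =
        (∫ x in {x | h x = 1}, Z x * (p₁ * f₁ x + p₂ * f₂ x) ∂μ) +
          ∫ x in {x | h x = 2}, Z x * (p₁ * f₁ x + p₂ * f₂ x) ∂μ := by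
      rw [hsplit]
      exact setIntegral_union hdisj hs2 hZDint.integrableOn hZDint.integrableOn
    have hb1 : ∫ x in {x | h x = 1}, Z x * (p₁ * f₁ x + p₂ * f₂ x) ∂μ ≤
        ∫ x in {x | h x = 1}, p₂ * f₂ x ∂μ :=
      setIntegral_mono_on hZDint.integrableOn (hf₂int.const_mul p₂).integrableOn hs1
        (fun x _ => hZD2 x)
    have hb2 : ∫ x in {x | h x = 2}, Z x * (p₁ * f₁ x + p₂ * f₂ x) ∂μ ≤
        ∫ x in {x | h x = 2}, p₁ * f₁ x ∂μ :=
      setIntegral_mono_on hZDint.integrableOn (hf₁int.const_mul p₁).integrableOn hs2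
        (fun x _ => hZD1 x)
    have hswap : ∫ x in Θᶜ, Z x * (p₁ * f₁ x + p₂ * f₂ x) ∂μ ≤
        ∫ x in {x | h x ≠ 0}, Z x * (p₁ * f₁ x + p₂ * f₂ x) ∂μ := by
      apply swap_le μ (fun x => p₁ * f₁ x + p₂ * f₂ x) Z hDint hZDint hD0 c
        {x | h x ≠ 0} Θᶜ (hs0.compl) hΘmeas.compl
      · rw [hdenom, hΘcD]
      · intro x hx
        have hxΘ : x ∈ Θ := by simpa using hx.2
        exact hΘ_ge x hxΘ
      · intro x hx
        exact hΘc_le x hx.1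
    calc ∫ x in Θᶜ, Z x * (p₁ * f₁ x + p₂ * f₂ x) ∂μ
        ≤ ∫ x in {x | h x ≠ 0}, Z x * (p₁ * f₁ x + p₂ * f₂ x) ∂μ := hswap
      _ = _ := hZD_union
      _ ≤ _ := by linarith
  -- the optimal classifier
  set h₀ : 𝓧 → ℕ := fun x => if x ∈ Θ then 0 else if (1:ℝ)/2 ≤ η x then 1 else 2 with hh₀
  have hh₀meas : Measurable h₀ := by
    apply Measurable.ite hΘmeas measurable_const
    exact Measurable.ite (measurableSet_le measurable_const hηmeas)
      measurable_const measurable_const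
  have hh₀le : ∀ x, h₀ x ≤ 2 := by
    intro x; rw [hh₀]; simp only; split_ifs <;> omega
  have hset0 : {x | h₀ x = 0} = Θ := by
    ext x; simp only [hh₀, mem_setOf_eq]; split_ifs with h1 h2 <;> simp [h1]
  have hset1 : {x | h₀ x = 1} = Θᶜ ∩ {x | (1:ℝ)/2 ≤ η x} := by
    ext x
    simp only [hh₀, mem_setOf_eq, mem_inter_iff, mem_compl_iff]
    split_ifs with h1 h2
    · exact iff_of_false (by decide) (fun hh => hh.1 h1)
    · exact iff_of_true rfl ⟨h1, h2⟩
    · exact iff_of_false (by decide) (fun hh => h2 hh.2)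
  have hset2 : {x | h₀ x = 2} = Θᶜ \ {x | (1:ℝ)/2 ≤ η x} := by
    ext x
    simp only [hh₀, mem_setOf_eq, mem_diff, mem_compl_iff]
    split_ifs with h1 h2
    · exact iff_of_false (by decide) (fun hh => hh.1 h1)
    · exact iff_of_false (by decide) (fun hh => hh.2 h2)
    · exact iff_of_true rfl ⟨h1, h2⟩
  have hh₀con : (∫ x in {x | h₀ x = 0}, (p₁ * f₁ x + p₂ * f₂ x) ∂μ) = γ := by
    rw [hset0]; exact hΘγ
  have hh₀ne : {x | h₀ x ≠ 0} = Θᶜ := by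
    ext x
    simp only [mem_setOf_eq, mem_compl_iff]
    rw [show (h₀ x ≠ 0) ↔ ¬ (h₀ x = 0) from Iff.rfl]
    constructor
    · intro hne hxΘ
      exact hne (by rw [← hset0] at hxΘ; exact hxΘ)
    · intro hxΘ hne
      rw [← hset0] at hxΘ
      exact hxΘ hne
  have hη_s : MeasurableSet {x | (1:ℝ)/2 ≤ η x} := measurableSet_le measurable_const hηmeas
  -- value of the optimal classifier
  have hnum : (∫ x in {x | h₀ x = 2}, p₁ * f₁ x ∂μ) + ∫ x in {x | h₀ x = 1}, p₂ * f₂ x ∂μ =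
      ∫ x in Θᶜ, Z x * (p₁ * f₁ x + p₂ * f₂ x) ∂μ := by
    have e2 : ∫ x in {x | h₀ x = 2}, p₁ * f₁ x ∂μ =
        ∫ x in Θᶜ ∩ {x | (1:ℝ)/2 ≤ η x}ᶜ, Z x * (p₁ * f₁ x + p₂ * f₂ x) ∂μ := by
      rw [hset2, Set.diff_eq]
      apply setIntegral_congr_fun (hΘmeas.compl.inter hη_s.compl)
      intro x hx
      have hx2 : ¬ (1:ℝ)/2 ≤ η x := hx.2
      have hZx : Z x = η x := by
        rw [hZ]; exact min_eq_left (by push_neg at hx2; linarith)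
      show p₁ * f₁ x = Z x * (p₁ * f₁ x + p₂ * f₂ x)
      rw [hZx, hηD x]
    have e1 : ∫ x in {x | h₀ x = 1}, p₂ * f₂ x ∂μ =
        ∫ x in Θᶜ ∩ {x | (1:ℝ)/2 ≤ η x}, Z x * (p₁ * f₁ x + p₂ * f₂ x) ∂μ := by
      rw [hset1]
      apply setIntegral_congr_fun (hΘmeas.compl.inter hη_s)
      intro x hx
      have hx1 : (1:ℝ)/2 ≤ η x := hx.2
      have hZx : Z x = 1 - η x := by
        rw [hZ]; exact min_eq_right (by linarith)
      show p₂ * f₂ x = Z x * (p₁ * f₁ x + p₂ * f₂ x)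
      rw [hZx, hη'D x]
    have hsum := integral_inter_add_diff (μ := μ)
      (f := fun x => Z x * (p₁ * f₁ x + p₂ * f₂ x)) (s := Θᶜ)
      (t := {x | (1:ℝ)/2 ≤ η x}) hη_s hZDint.integrableOn
    rw [e1, e2, Set.diff_eq] at *
    linarith [hsum]
  have hval : condRisk μ f₁ f₂ p₁ p₂ h₀ =
      (∫ x in Θᶜ, Z x * (p₁ * f₁ x + p₂ * f₂ x) ∂μ) / (1 - γ) := by
    rw [condRisk, hnum, hh₀ne, hΘcD]
  -- conclusion
  rw [hRΘ, hΘcD, minimaxRisk]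
  have hmem : (∫ x in Θᶜ, Z x * (p₁ * f₁ x + p₂ * f₂ x) ∂μ) / (1 - γ) ∈
      {r | ∃ h : 𝓧 → ℕ, Measurable h ∧ (∀ x, h x ≤ 2) ∧
        (∫ x in {x | h x = 0}, (p₁ * f₁ x + p₂ * f₂ x) ∂μ) = γ ∧
        r = condRisk μ f₁ f₂ p₁ p₂ h} :=
    ⟨h₀, hh₀meas, hh₀le, hh₀con, hval.symm⟩
  have hlb : ∀ r ∈ {r | ∃ h : 𝓧 → ℕ, Measurable h ∧ (∀ x, h x ≤ 2) ∧
      (∫ x in {x | h x = 0}, (p₁ * f₁ x + p₂ * f₂ x) ∂μ) = γ ∧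
      r = condRisk μ f₁ f₂ p₁ p₂ h},
      (∫ x in Θᶜ, Z x * (p₁ * f₁ x + p₂ * f₂ x) ∂μ) / (1 - γ) ≤ r := by
    rintro r ⟨h, hm, hle2, hcon, rfl⟩
    obtain ⟨hnum_le, hden⟩ := key h hm hle2 hcon
    rw [condRisk, hden]
    exact div_le_div_of_nonneg_right hnum_le hpos.le
  exact le_antisymm (csInf_le ⟨_, hlb⟩ hmem) (le_csInf ⟨_, hmem⟩ hlb)
end

section
/- If P(min(η(X), 1-η(X)) ≤ ε) > 0 for every ε > 0, then τ_γ → 1 as γ → 1⁻ and the limit ℛ* := lim_{γ→1⁻} ℛ(γ) equals 0. -/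
/-!
Write `Z = min(η, 1 - η)` and `t_γ = 1 - τ_γ ≥ 0`. The quantile condition gives
`γ ≤ P(Z ≥ t_γ)`. If `t_γ ≥ ε` then `P(Z ≥ t_γ) ≤ P(Z ≥ ε) ≤ 1 - P(Z ≤ ε/2)`, and the mass
assumption makes the right-hand side `< 1`; so once `γ > 1 - P(Z ≤ ε/2)` we must have
`t_γ < ε`. Hence `τ_γ → 1`, and `0 ≤ ℛ(γ) ≤ 1 - τ_γ` squeezes `ℛ(γ)` to `0`.
-/

open MeasureTheory Set Filter Topology

namespace MeasureTheory

variable {Ω : Type*} [MeasurableSpace Ω] {P : Measure Ω} [IsProbabilityMeasure P] {Z : Ω → ℝ}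

lemma probReal_le_le_one_sub_probReal_le (hZ : Measurable Z) {δ ε : ℝ} (hδε : δ < ε) :
    P.real {x | ε ≤ Z x} ≤ 1 - P.real {x | Z x ≤ δ} := by
  have hmeas : MeasurableSet {x | Z x ≤ δ} := hZ measurableSet_Iic
  rw [← probReal_compl_eq_one_sub hmeas]
  exact measureReal_mono fun x (hx : ε ≤ Z x) (hx' : Z x ≤ δ) => by linarith

lemma tendsto_zero_of_le_probReal_le {ι : Type*} {l : Filter ι} {g t : ι → ℝ}
    (hZ : Measurable Z) (hmass : ∀ ε, 0 < ε → 0 < P.real {x | Z x ≤ ε})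
    (hg : Tendsto g l (𝓝 1)) (ht : ∀ᶠ i in l, 0 ≤ t i)
    (hquant : ∀ᶠ i in l, g i ≤ P.real {x | t i ≤ Z x}) :
    Tendsto t l (𝓝 0) := by
  refine tendsto_order.2 ⟨fun a ha => ht.mono fun i hi => ha.trans_le hi, fun ε hε => ?_⟩
  have hc : 0 < P.real {x | Z x ≤ ε / 2} := hmass _ (half_pos hε)
  have hg_large : ∀ᶠ i in l, 1 - P.real {x | Z x ≤ ε / 2} < g i :=
    hg.eventually (lt_mem_nhds (by linarith))
  filter_upwards [hquant, hg_large] with i hi hgi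
  by_contra! hεt
  have hmono : P.real {x | t i ≤ Z x} ≤ P.real {x | ε ≤ Z x} :=
    measureReal_mono fun x (hx : t i ≤ Z x) => hεt.trans hx
  linarith [probReal_le_le_one_sub_probReal_le (P := P) hZ (half_lt_self hε)]

end MeasureTheory

theorem risk_limit_zero_general {𝓧 : Type*} [MeasurableSpace 𝓧]
    (P : Measure 𝓧) [IsProbabilityMeasure P]
    (η : 𝓧 → ℝ) (hη : Measurable η)
    (Z : 𝓧 → ℝ) (hZ : ∀ x, Z x = min (η x) (1 - η x))
    (τ R : ℝ → ℝ)
    (hτmem : ∀ γ ∈ Ico (0 : ℝ) 1, τ γ ∈ Icc (1 / 2 : ℝ) 1)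
    (hτquant : ∀ γ ∈ Ico (0 : ℝ) 1,
      (P {x | 1 - τ γ < Z x}).toReal ≤ γ ∧ γ ≤ (P {x | 1 - τ γ ≤ Z x}).toReal)
    (hRnonneg : ∀ γ ∈ Ico (0 : ℝ) 1, 0 ≤ R γ)
    (hRle : ∀ γ ∈ Ico (0 : ℝ) 1, R γ ≤ 1 - τ γ)
    (hmass : ∀ ε : ℝ, 0 < ε → 0 < (P {x | Z x ≤ ε}).toReal) :
    Tendsto τ (nhdsWithin 1 (Iio 1)) (nhds 1) ∧
    Tendsto R (nhdsWithin 1 (Iio 1)) (nhds 0) := by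
  have hZm : Measurable Z := funext hZ ▸ hη.min (measurable_const.sub hη)
  have hmem : ∀ᶠ γ in 𝓝[<] (1 : ℝ), γ ∈ Ico (0 : ℝ) 1 :=
    mem_of_superset (Ioo_mem_nhdsLT zero_lt_one) Ioo_subset_Ico_self
  have hgap : Tendsto (fun γ => 1 - τ γ) (𝓝[<] 1) (𝓝 0) :=
    tendsto_zero_of_le_probReal_le hZm hmass (tendsto_nhdsWithin_of_tendsto_nhds tendsto_id)
      (hmem.mono fun γ hγ => sub_nonneg.2 (hτmem γ hγ).2) (hmem.mono fun γ hγ => (hτquant γ hγ).2)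
  refine ⟨by simpa using (tendsto_const_nhds (x := (1 : ℝ))).sub hgap, ?_⟩
  exact squeeze_zero' (hmem.mono hRnonneg) (hmem.mono hRle) hgap

/-- If `P(min(η(X), 1-η(X)) ≤ ε) > 0` for every `ε > 0`, then the optimal threshold
satisfies `τ_γ → 1` as `γ → 1⁻` and `ℛ* = lim_{γ→1⁻} ℛ(γ) = 0`.  Here `P` is the law
of `X`, `τ γ ∈ [1/2,1]` is the quantile threshold of `max(η,1-η)` determining the
optimal indecision region (`P(Z > 1-τ_γ) ≤ γ ≤ P(Z ≥ 1-τ_γ)` with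
`Z = min(η,1-η)`), and the minimax risk `ℛ` is non-increasing with
`0 ≤ ℛ(γ) ≤ 1 - τ_γ`. -/
theorem risk_limit_zero {𝓧 : Type*} [MeasurableSpace 𝓧]
    (P : Measure 𝓧) [IsProbabilityMeasure P]
    (η : 𝓧 → ℝ) (hη : Measurable η)
    (Z : 𝓧 → ℝ) (hZ : ∀ x, Z x = min (η x) (1 - η x))
    (τ R : ℝ → ℝ)
    (hτmem : ∀ γ ∈ Ico (0 : ℝ) 1, τ γ ∈ Icc (1 / 2 : ℝ) 1)
    (hτquant : ∀ γ ∈ Ico (0 : ℝ) 1,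
      (P {x | 1 - τ γ < Z x}).toReal ≤ γ ∧ γ ≤ (P {x | 1 - τ γ ≤ Z x}).toReal)
    (hRnonneg : ∀ γ ∈ Ico (0 : ℝ) 1, 0 ≤ R γ)
    (hRle : ∀ γ ∈ Ico (0 : ℝ) 1, R γ ≤ 1 - τ γ)
    (hRanti : AntitoneOn R (Ico 0 1))
    (hmass : ∀ ε : ℝ, 0 < ε → 0 < (P {x | Z x ≤ ε}).toReal) :
    Tendsto τ (nhdsWithin 1 (Iio 1)) (nhds 1) ∧
    Tendsto R (nhdsWithin 1 (Iio 1)) (nhds 0) :=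
  risk_limit_zero_general P η hη Z hZ τ R hτmem hτquant hRnonneg hRle hmass
end

section
/- Symmetric Gaussian mixture phase transition, achievability for c > 1/2: with Δ = c√(2 log(1/δ)) and t = (1-c)√(2 log(1/δ)), for all sufficiently small δ > 0 one has P(ξ ≥ Δ+t)/(P(ξ ≥ Δ+t) + P(ξ ≥ t-Δ)) ≤ δ, and consequently the optimal indecision mass γ_δ (defined by P(ξ ≥ Δ-t_δ) - P(ξ ≥ Δ+t_δ) = γ_δ where t_δ enforces conditional misclassification δ) satisfies γ_δ ≤ δ^{(2c-1)²}/((2c-1)√(4π log(1/δ))). -/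
open MeasureTheory Real Set

/-- Standard Gaussian tail `P(ξ ≥ t)`. -/
noncomputable def gaussTail (t : ℝ) : ℝ :=
  ∫ x in Ici t, Real.exp (-x ^ 2 / 2) / Real.sqrt (2 * π)

lemma gauss_eq (x : ℝ) : Real.exp (-(1/2 : ℝ) * x ^ 2) / Real.sqrt (2 * π)
    = Real.exp (-x ^ 2 / 2) / Real.sqrt (2 * π) := by ring_nf

lemma gauss_integrable : Integrable (fun x : ℝ => Real.exp (-x ^ 2 / 2) / Real.sqrt (2 * π)) := by
  have h : Integrable (fun x : ℝ => Real.exp (-(1/2 : ℝ) * x ^ 2)) :=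
    integrable_exp_neg_mul_sq (by norm_num)
  have := h.div_const (Real.sqrt (2 * π))
  exact this.congr (Filter.Eventually.of_forall fun x => gauss_eq x)

lemma gaussTail_nonneg (t : ℝ) : 0 ≤ gaussTail t :=
  setIntegral_nonneg measurableSet_Ici (fun x _ => by positivity)

lemma gaussTail_anti : Antitone gaussTail := by
  intro a b hab
  apply setIntegral_mono_set gauss_integrable.integrableOn
  · filter_upwards with x using by positivity
  · exact HasSubset.Subset.eventuallyLE (Ici_subset_Ici.mpr hab)

lemma gaussTail_lb {a : ℝ} (ha : 0 ≤ a) :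
    Real.exp (-(a+1)^2/2) / Real.sqrt (2*π) ≤ gaussTail a := by
  have h1 : (∫ x in Icc a (a+1), Real.exp (-(a+1)^2/2) / Real.sqrt (2*π)) =
      Real.exp (-(a+1)^2/2) / Real.sqrt (2*π) := by
    rw [setIntegral_const]
    simp [Real.volume_Icc]
  rw [← h1]
  have h2 : (∫ x in Icc a (a+1), Real.exp (-(a+1)^2/2) / Real.sqrt (2*π)) ≤
      ∫ x in Icc a (a+1), Real.exp (-x ^ 2 / 2) / Real.sqrt (2 * π) := by
    apply setIntegral_mono_on (integrableOn_const (by simp [Real.volume_Icc]))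
      gauss_integrable.integrableOn measurableSet_Icc
    intro x hx
    have hx1 := hx.1; have hx2 := hx.2
    have : x^2 ≤ (a+1)^2 := by nlinarith
    have hs : (0:ℝ) < Real.sqrt (2*π) := by positivity
    apply div_le_div_of_nonneg_right ?_ hs.le
    apply Real.exp_le_exp.mpr
    linarith
  refine h2.trans ?_
  apply setIntegral_mono_set gauss_integrable.integrableOn
  · filter_upwards with x using by positivity
  · exact HasSubset.Subset.eventuallyLE (fun x hx => hx.1)

lemma gaussTail_lb0 {a : ℝ} (ha : a ≤ 0) :
    Real.exp (-(1:ℝ)/2) / Real.sqrt (2*π) ≤ gaussTail a := by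
  have h1 := gaussTail_lb (le_refl (0:ℝ))
  have h2 := gaussTail_anti ha
  have h3 : Real.exp (-(1:ℝ)/2) = Real.exp (-((0:ℝ)+1)^2/2) := by norm_num
  rw [h3]; linarith

lemma gaussTail_pos (x : ℝ) : 0 < gaussTail x := by
  rcases le_or_gt x 0 with h | h
  · exact lt_of_lt_of_le (by positivity) (gaussTail_lb0 h)
  · exact lt_of_lt_of_le (by positivity) (gaussTail_lb h.le)

lemma integral_id_mul_gauss (x : ℝ) :
    (∫ y in Ioi x, y * Real.exp (-y^2/2)) = Real.exp (-x^2/2) := by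
  have hd : ∀ y ∈ Ici x, HasDerivAt (fun y : ℝ => -Real.exp (-y^2/2)) (y * Real.exp (-y^2/2)) y := by
    intro y _
    have h1 : HasDerivAt (fun y : ℝ => -y^2/2) (-y) y := by
      have := (hasDerivAt_pow 2 y).neg
      exact (this.div_const 2).congr_deriv (by simp; ring)
    have h2 := (Real.hasDerivAt_exp (-y^2/2)).comp y h1
    exact h2.neg.congr_deriv (by ring)
  have hint : IntegrableOn (fun y : ℝ => y * Real.exp (-y^2/2)) (Ioi x) := by
    have : Integrable (fun y : ℝ => y * Real.exp (-(1/2:ℝ) * y^2)) :=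
      integrable_mul_exp_neg_mul_sq (by norm_num)
    exact (this.congr (Filter.Eventually.of_forall fun y => by ring_nf)).integrableOn
  have htend : Filter.Tendsto (fun y : ℝ => -Real.exp (-y^2/2)) Filter.atTop (nhds 0) := by
    rw [← neg_zero]
    apply Filter.Tendsto.neg
    apply Real.tendsto_exp_atBot.comp
    apply Filter.Tendsto.atBot_div_const (by norm_num : (0:ℝ) < 2)
    exact Filter.tendsto_neg_atBot_iff.mpr (Filter.tendsto_pow_atTop (by norm_num))
  have := MeasureTheory.integral_Ioi_of_hasDerivAt_of_tendsto' hd hint htend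
  rw [this]; ring

lemma gaussTail_ub {x : ℝ} (hx : 0 < x) :
    gaussTail x ≤ Real.exp (-x^2/2) / (Real.sqrt (2*π) * x) := by
  have hS : (0:ℝ) < Real.sqrt (2*π) := by positivity
  have hint : IntegrableOn (fun y : ℝ => y * Real.exp (-y^2/2) / (Real.sqrt (2*π) * x)) (Ioi x) := by
    have : Integrable (fun y : ℝ => y * Real.exp (-(1/2:ℝ) * y^2)) :=
      integrable_mul_exp_neg_mul_sq (by norm_num)
    exact ((this.congr (Filter.Eventually.of_forall fun y => by ring_nf)).div_const _).integrableOn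
  have h0 : gaussTail x = ∫ y in Ioi x, Real.exp (-y ^ 2 / 2) / Real.sqrt (2 * π) :=
    MeasureTheory.integral_Ici_eq_integral_Ioi
  rw [h0]
  have h1 : (∫ y in Ioi x, Real.exp (-y ^ 2 / 2) / Real.sqrt (2 * π)) ≤
      ∫ y in Ioi x, y * Real.exp (-y^2/2) / (Real.sqrt (2*π) * x) := by
    apply setIntegral_mono_on gauss_integrable.integrableOn hint measurableSet_Ioi
    intro y hy
    have hy' : x ≤ y := le_of_lt hy
    rw [div_le_div_iff₀ hS (by positivity)]
    have he : (0:ℝ) < Real.exp (-y^2/2) := Real.exp_pos _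
    nlinarith [mul_nonneg (mul_nonneg (sub_nonneg.mpr hy') he.le) hS.le]
  refine h1.trans ?_
  rw [MeasureTheory.integral_div, integral_id_mul_gauss]

set_option maxHeartbeats 1000000 in
/-- Achievability side of the sharp phase transition for `c > 1/2`: with
`Δ = c√(2 log(1/δ))` and `t = (1-c)√(2 log(1/δ))`, for all sufficiently small
`δ > 0` the conditional misclassification at half-width `t` is at most `δ`, and
consequently the optimal indecision mass `γ_δ` (determined by any half-width
`t_δ ≥ 0` enforcing conditional misclassification exactly `δ`) satisfies
`γ_δ ≤ δ^{(2c-1)²}/((2c-1)√(4π log(1/δ)))`. -/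
theorem gaussian_phase_transition_achievability (c : ℝ) (hc : 1 / 2 < c) (hc1 : c < 1) :
    ∃ δ₀ : ℝ, 0 < δ₀ ∧ ∀ δ : ℝ, 0 < δ → δ < δ₀ →
      (gaussTail (c * Real.sqrt (2 * Real.log (1 / δ)) +
          (1 - c) * Real.sqrt (2 * Real.log (1 / δ))) /
        (gaussTail (c * Real.sqrt (2 * Real.log (1 / δ)) +
            (1 - c) * Real.sqrt (2 * Real.log (1 / δ))) +
          gaussTail ((1 - c) * Real.sqrt (2 * Real.log (1 / δ)) -
            c * Real.sqrt (2 * Real.log (1 / δ)))) ≤ δ) ∧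
      (∀ tδ γδ : ℝ, 0 ≤ tδ →
        gaussTail (c * Real.sqrt (2 * Real.log (1 / δ)) + tδ) /
          (gaussTail (c * Real.sqrt (2 * Real.log (1 / δ)) + tδ) +
            gaussTail (tδ - c * Real.sqrt (2 * Real.log (1 / δ)))) = δ →
        γδ = gaussTail (c * Real.sqrt (2 * Real.log (1 / δ)) - tδ) -
              gaussTail (c * Real.sqrt (2 * Real.log (1 / δ)) + tδ) →
        γδ ≤ δ ^ ((2 * c - 1) ^ 2) /
              ((2 * c - 1) * Real.sqrt (4 * π * Real.log (1 / δ)))) := by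
  refine ⟨Real.exp (-9), Real.exp_pos _, fun δ hδ hδ9 => ?_⟩
  have hS : (0:ℝ) < Real.sqrt (2*π) := by positivity
  have hL : 9 < Real.log (1/δ) := by
    rw [one_div, Real.log_inv]
    have := Real.log_lt_log hδ hδ9
    rw [Real.log_exp] at this
    linarith
  set L := Real.log (1/δ) with hLdef
  set s := Real.sqrt (2 * L) with hsdef
  have hs2 : s^2 = 2*L := Real.sq_sqrt (by linarith)
  have hspos : 0 < s := Real.sqrt_pos.mpr (by linarith)
  have hs4 : 4 < s := by nlinarith
  have hexpL : Real.exp (-L) = δ := by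
    rw [hLdef, one_div, Real.log_inv, neg_neg, Real.exp_log hδ]
  have hmul : Real.exp (-(1:ℝ)/2) * Real.exp (1/2) = 1 := by
    rw [← Real.exp_add]; norm_num
  have hexp2 : Real.exp ((1:ℝ)/2) < 2 := by
    have h : Real.exp ((1:ℝ)/2) * Real.exp ((1:ℝ)/2) = Real.exp 1 := by
      rw [← Real.exp_add]; norm_num
    nlinarith [Real.exp_one_lt_d9, Real.exp_pos ((1:ℝ)/2)]
  have hE2 : (1:ℝ)/2 < Real.exp (-(1:ℝ)/2) := by
    nlinarith [Real.exp_pos (-(1:ℝ)/2), Real.exp_pos ((1:ℝ)/2)]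
  have hcs : 2 < c * s := by nlinarith
  clear_value s L
  constructor
  · -- part 1
    have e1 : c*s + (1-c)*s = s := by ring
    have e2 : (1-c)*s - c*s = (1-2*c)*s := by ring
    rw [e1, e2]
    have hA0 : 0 ≤ gaussTail s := gaussTail_nonneg s
    have hBpos : 0 < gaussTail ((1-2*c)*s) := gaussTail_pos _
    have hB : Real.exp (-(1:ℝ)/2) / Real.sqrt (2*π) ≤ gaussTail ((1-2*c)*s) :=
      gaussTail_lb0 (by nlinarith)
    have hAub : gaussTail s ≤ δ / (Real.sqrt (2*π) * s) := by
      have h := gaussTail_ub hspos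
      have : -s^2/2 = -L := by rw [hs2]; ring
      rwa [this, hexpL] at h
    rw [div_le_iff₀ (by linarith)]
    have key : gaussTail s ≤ δ * (Real.exp (-(1:ℝ)/2) / Real.sqrt (2*π)) := by
      refine hAub.trans ?_
      rw [div_le_iff₀ (by positivity)]
      have heq : δ * (Real.exp (-(1:ℝ)/2) / Real.sqrt (2*π)) * (Real.sqrt (2*π) * s)
          = δ * Real.exp (-(1:ℝ)/2) * s := by field_simp
      rw [heq]
      nlinarith [mul_nonneg (mul_nonneg hδ.le hspos.le)
          (by linarith : (0:ℝ) ≤ Real.exp (-(1:ℝ)/2) - 1/2),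
        mul_nonneg hδ.le (by linarith : (0:ℝ) ≤ s - 4)]
    refine key.trans ?_
    have : (0:ℝ) ≤ gaussTail s + gaussTail ((1-2*c)*s) - Real.exp (-(1:ℝ)/2)/Real.sqrt (2*π) := by
      linarith
    nlinarith [mul_nonneg hδ.le this]
  · -- part 2
    intro tδ γδ htδ heq hγ
    set P := gaussTail (c * s + tδ) with hPdef
    set Q := gaussTail (tδ - c * s) with hQdef
    clear_value P Q
    have hP0 : 0 ≤ P := hPdef ▸ gaussTail_nonneg _
    have hQpos : 0 < Q := hQdef ▸ gaussTail_pos _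
    have hPQ : 0 < P + Q := by linarith
    have hPeq : P = δ * (P + Q) := (div_eq_iff hPQ.ne').mp heq
    have hδQ : δ * Q ≤ P := by nlinarith [mul_nonneg hδ.le hP0]
    have hbpos : 0 < c*s + tδ := by linarith
    have hPub : P ≤ Real.exp (-(c*s+tδ)^2/2) / (Real.sqrt (2*π) * (c*s+tδ)) :=
      hPdef ▸ gaussTail_ub hbpos
    have hPub' : P * (Real.sqrt (2*π) * (c*s+tδ)) ≤ Real.exp (-(c*s+tδ)^2/2) :=
      (le_div_iff₀ (mul_pos hS hbpos)).mp hPub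
    rcases le_or_gt tδ (c*s) with hcase | hcase
    · -- t_δ ≤ Δ
      have hQlb : Real.exp (-(1:ℝ)/2) / Real.sqrt (2*π) ≤ Q :=
        hQdef ▸ gaussTail_lb0 (by linarith)
      have hQlb' : Real.exp (-(1:ℝ)/2) ≤ Q * Real.sqrt (2*π) :=
        (div_le_iff₀ hS).mp hQlb
      have hkey : δ * Real.exp (-(1:ℝ)/2) * (c*s+tδ) ≤ Real.exp (-(c*s+tδ)^2/2) := by
        have h1 := mul_le_mul_of_nonneg_left hQlb'
          (mul_nonneg hδ.le hbpos.le : (0:ℝ) ≤ δ * (c*s+tδ))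
        have h2 := mul_le_mul_of_nonneg_right hδQ
          (mul_nonneg hS.le hbpos.le : (0:ℝ) ≤ Real.sqrt (2*π) * (c*s+tδ))
        calc δ * Real.exp (-(1:ℝ)/2) * (c*s+tδ)
            = δ * (c*s+tδ) * Real.exp (-(1:ℝ)/2) := by ring
          _ ≤ δ * (c*s+tδ) * (Q * Real.sqrt (2*π)) := h1
          _ = δ * Q * (Real.sqrt (2*π) * (c*s+tδ)) := by ring
          _ ≤ P * (Real.sqrt (2*π) * (c*s+tδ)) := h2
          _ ≤ _ := hPub'
      have hlt : Real.exp (-L) < Real.exp (-(c*s+tδ)^2/2) := by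
        rw [hexpL]
        linarith [hkey, mul_pos hδ (by linarith : (0:ℝ) < Real.exp (-(1:ℝ)/2) - 1/2),
          mul_nonneg (mul_nonneg hδ.le (Real.exp_pos (-(1:ℝ)/2)).le)
            (by linarith : (0:ℝ) ≤ c*s+tδ-2)]
      have hb2 : (c*s+tδ)^2 < 2*L := by
        have := Real.exp_lt_exp.mp hlt
        linarith
      have hbs : c*s + tδ < s := by
        have h := lt_of_pow_lt_pow_left₀ 2 hspos.le (by linarith : (c*s+tδ)^2 < s^2)
        exact h
      have hgap : (2*c-1)*s ≤ c*s - tδ := by linarith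
      have h2cs : 0 < (2*c-1)*s := mul_pos (by linarith) hspos
      have hfin : gaussTail (c*s - tδ) ≤
          Real.exp (-((2*c-1)*s)^2/2) / (Real.sqrt (2*π) * ((2*c-1)*s)) :=
        (gaussTail_anti hgap).trans (gaussTail_ub h2cs)
      have hrw : Real.exp (-((2*c-1)*s)^2/2) / (Real.sqrt (2*π) * ((2*c-1)*s))
          = δ ^ ((2*c-1)^2) / ((2*c-1) * Real.sqrt (4*π*L)) := by
        have h1 : Real.sqrt (2*π) * s = Real.sqrt (4*π*L) := by
          rw [hsdef, ← Real.sqrt_mul (by positivity : (0:ℝ) ≤ 2*π)]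
          congr 1
          ring
        have hden : Real.sqrt (2*π) * ((2*c-1)*s) = (2*c-1) * Real.sqrt (4*π*L) := by
          rw [← h1]; ring
        have hlogδ : Real.log δ = -L := by rw [hLdef, one_div, Real.log_inv, neg_neg]
        rw [Real.rpow_def_of_pos hδ, hden]
        congr 2
        linear_combination (-(2*c-1)^2/2) * hs2 - (2*c-1)^2 * hlogδ
      rw [hγ]
      calc gaussTail (c*s - tδ) - P ≤ gaussTail (c*s - tδ) := by linarith
        _ ≤ _ := hfin
        _ = _ := hrw
    · -- t_δ > Δ : contradiction
      exfalso
      have hQlb : Real.exp (-(tδ - c*s + 1)^2/2) / Real.sqrt (2*π) ≤ Q := by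
        exact hQdef ▸ gaussTail_lb (a := tδ - c*s) (by linarith)
      have hQlb' : Real.exp (-(tδ - c*s + 1)^2/2) ≤ Q * Real.sqrt (2*π) :=
        (div_le_iff₀ hS).mp hQlb
      have hkey : δ * Real.exp (-(tδ - c*s + 1)^2/2) * (c*s+tδ) ≤
          Real.exp (-(c*s+tδ)^2/2) := by
        have h1 := mul_le_mul_of_nonneg_left hQlb'
          (mul_nonneg hδ.le hbpos.le : (0:ℝ) ≤ δ * (c*s+tδ))
        have h2 := mul_le_mul_of_nonneg_right hδQ
          (mul_nonneg hS.le hbpos.le : (0:ℝ) ≤ Real.sqrt (2*π) * (c*s+tδ))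
        calc δ * Real.exp (-(tδ - c*s + 1)^2/2) * (c*s+tδ)
            = δ * (c*s+tδ) * Real.exp (-(tδ - c*s + 1)^2/2) := by ring
          _ ≤ δ * (c*s+tδ) * (Q * Real.sqrt (2*π)) := h1
          _ = δ * Q * (Real.sqrt (2*π) * (c*s+tδ)) := by ring
          _ ≤ P * (Real.sqrt (2*π) * (c*s+tδ)) := h2
          _ ≤ _ := hPub'
      have hexparg : -(c*s+tδ)^2/2 ≤ -(tδ - c*s + 1)^2/2 + (-L + 1/2) := by
        nlinarith [mul_nonneg (by nlinarith : (0:ℝ) ≤ 2*c*s - 1) (by linarith : (0:ℝ) ≤ tδ - c*s),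
          mul_nonneg (mul_nonneg (by linarith : (0:ℝ) ≤ 2*c-1) (by linarith : (0:ℝ) ≤ 2*c+1))
            (sq_nonneg s)]
      have hX : Real.exp (-(c*s+tδ)^2/2) ≤
          Real.exp (-(tδ - c*s + 1)^2/2) * (δ * Real.exp (1/2)) := by
        calc Real.exp (-(c*s+tδ)^2/2) ≤ Real.exp (-(tδ - c*s + 1)^2/2 + (-L + 1/2)) :=
              Real.exp_le_exp.mpr hexparg
          _ = Real.exp (-(tδ - c*s + 1)^2/2) * (δ * Real.exp (1/2)) := by
              rw [Real.exp_add, Real.exp_add, hexpL]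
      have hE'pos : (0:ℝ) < Real.exp (-(tδ - c*s + 1)^2/2) := Real.exp_pos _
      have hb4 : 4 < c*s + tδ := by linarith
      linarith [hkey, hX, mul_pos hδ hE'pos,
        mul_nonneg (mul_nonneg hδ.le hE'pos.le) (by linarith : (0:ℝ) ≤ c*s+tδ-4),
        mul_nonneg (mul_nonneg hδ.le hE'pos.le) (by linarith : (0:ℝ) ≤ 2 - Real.exp (1/2))]
end

section
/- In the multi-class setting with K classes, the classifier Y*_γ = argmax_i(p_i f_i(X))·1{max_i p_i f_i(X) ≥ τ_γ Σ_i p_i f_i(X)} is minimax optimal among selective classifiers Ỹ ∈ {0,1,…,K} with P(Ỹ=0) = γ for the conditional risk P(Ỹ ≠ Y | Ỹ ≠ 0), and its risk equals 1 - (∫_{{Y*_γ ≠ 0}} max_i(p_i f_i) dμ)/(1-γ). -/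
open MeasureTheory Set
open scoped Classical

/-- Conditional risk `P(h ≠ Y | h ≠ 0)` of a selective classifier
`h : 𝓧 → {0,1,…,K}` (class `i : Fin K` encoded as `i+1`, `0` = abstain) in the
`K`-component mixture with priors `p` and densities `f` w.r.t. `μ`. -/
noncomputable def condRiskK {𝓧 : Type*} [MeasurableSpace 𝓧] {K : ℕ}
    (μ : Measure 𝓧) (p : Fin K → ℝ) (f : Fin K → 𝓧 → ℝ) (h : 𝓧 → ℕ) : ℝ :=
  1 - (∑ i : Fin K, ∫ x in {x | h x = i.val + 1}, p i * f i x ∂μ) /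
        ∫ x in {x | h x ≠ 0}, (∑ i : Fin K, p i * f i x) ∂μ

/-- Splitting `∫_{h ≠ 0}` into the classes `∫_{h = i+1}`, `i : Fin K`. -/
lemma sum_classes_integral {𝓧 : Type*} [MeasurableSpace 𝓧] {K : ℕ}
    (μ : Measure 𝓧) (h : 𝓧 → ℕ) (hh : Measurable h) (hhK : ∀ x, h x ≤ K)
    (g : 𝓧 → ℝ) (hg : Integrable g μ) :
    ∑ i : Fin K, ∫ x in {x | h x = i.val + 1}, g x ∂μ
      = ∫ x in {x | h x ≠ 0}, g x ∂μ := by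
  have hU : {x | h x ≠ 0} = ⋃ i : Fin K, {x | h x = i.val + 1} := by
    ext x
    simp only [mem_setOf_eq, mem_iUnion]
    constructor
    · intro hx
      exact ⟨⟨h x - 1, by have := hhK x; omega⟩, by
        show h x = (h x - 1) + 1; omega⟩
    · rintro ⟨i, hi⟩; omega
  rw [hU]
  refine (integral_iUnion_fintype (s := fun i : Fin K => {x | h x = i.val + 1})
    (fun i => hh (measurableSet_singleton _)) (fun i j hij => ?_)
    (fun i => hg.integrableOn)).symm
  simp only [Function.onFun, Set.disjoint_left, mem_setOf_eq]
  intro x hxi hxj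
  exact hij (Fin.ext (by omega))

/-- Multi-class selective classification (Theorem 5 of the paper): the classifier
`Y*_γ = argmax_i(p_i f_i(X))·1{max_i p_i f_i(X) ≥ τ_γ Σ_i p_i f_i(X)}` is minimax
optimal among selective classifiers with abstention probability `γ`, and its
conditional risk equals `1 - (∫_{{Y*_γ ≠ 0}} max_i(p_i f_i) dμ)/(1-γ)`. -/
theorem multiclass_selective_optimal {𝓧 : Type*} [MeasurableSpace 𝓧] (K : ℕ)
    (hK : 0 < K)
    (μ : Measure 𝓧) (p : Fin K → ℝ) (f : Fin K → 𝓧 → ℝ)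
    (hp : ∀ i, 0 ≤ p i) (hpsum : ∑ i, p i = 1)
    (hf : ∀ i, Measurable (f i)) (hf0 : ∀ i x, 0 ≤ f i x)
    (hfint : ∀ i, Integrable (f i) μ)
    (hdens : ∫ x, (∑ i : Fin K, p i * f i x) ∂μ = 1)
    (γ : ℝ) (hγ : γ ∈ Ico (0 : ℝ) 1)
    (τ : ℝ)
    -- measurable argmax selection
    (sel : 𝓧 → Fin K) (hsel : Measurable sel)
    (hselmax : ∀ x i, p i * f i x ≤ p (sel x) * f (sel x) x)
    (Ystar : 𝓧 → ℕ)
    (hYstar : ∀ x, Ystar x =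
      if τ * (∑ i : Fin K, p i * f i x) ≤ p (sel x) * f (sel x) x
      then (sel x).val + 1 else 0)
    -- abstention probability is γ
    (hYstarγ : ∫ x in {x | Ystar x = 0}, (∑ i : Fin K, p i * f i x) ∂μ = γ) :
    condRiskK μ p f Ystar =
      1 - (∫ x in {x | Ystar x ≠ 0}, p (sel x) * f (sel x) x ∂μ) / (1 - γ) ∧
    ∀ h : 𝓧 → ℕ, Measurable h → (∀ x, h x ≤ K) →
      (∫ x in {x | h x = 0}, (∑ i : Fin K, p i * f i x) ∂μ) = γ →
      condRiskK μ p f Ystar ≤ condRiskK μ p f h := by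
  set S : 𝓧 → ℝ := fun x => ∑ i : Fin K, p i * f i x with hSdef
  set g : 𝓧 → ℝ := fun x => p (sel x) * f (sel x) x with hgdef
  have hSmeas : Measurable S :=
    Finset.measurable_sum _ fun i _ => (hf i).const_mul _
  have hSint : Integrable S μ :=
    integrable_finset_sum _ fun i _ => ((hfint i).const_mul _)
  have hgmeas : Measurable g := by
    have hge : g = fun x => ∑ i : Fin K, if sel x = i then p i * f i x else 0 := by
      funext x
      simp [hgdef, Finset.sum_ite_eq]
    rw [hge]
    exact Finset.measurable_sum _ fun i _ =>
      Measurable.ite (hsel (measurableSet_singleton i)) ((hf i).const_mul _)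
        measurable_const
  have hgnn : ∀ x, 0 ≤ g x := fun x => mul_nonneg (hp _) (hf0 _ _)
  have hgS : ∀ x, g x ≤ S x := by
    intro x
    exact Finset.single_le_sum (fun i _ => mul_nonneg (hp i) (hf0 i x))
      (Finset.mem_univ (sel x))
  have hgint : Integrable g μ := by
    refine hSint.mono hgmeas.aestronglyMeasurable (ae_of_all _ fun x => ?_)
    rw [Real.norm_eq_abs, Real.norm_eq_abs, abs_of_nonneg (hgnn x),
      abs_of_nonneg ((hgnn x).trans (hgS x))]
    exact hgS x
  -- Ystar is measurable and bounded by K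
  have hYeq : Ystar = fun x => if τ * S x ≤ g x then (sel x).val + 1 else 0 := by
    funext x; exact hYstar x
  have hYmeas : Measurable Ystar := by
    rw [hYeq]
    refine Measurable.ite (measurableSet_le (hSmeas.const_mul τ) hgmeas) ?_
      measurable_const
    exact (measurable_from_top (f := fun i : Fin K => i.val + 1)).comp hsel
  have hYK : ∀ x, Ystar x ≤ K := by
    intro x; rw [hYstar x]
    split
    · exact (sel x).isLt
    · exact Nat.zero_le K
  -- characterization of abstention
  have hY0 : ∀ x, Ystar x = 0 ↔ ¬ (τ * S x ≤ g x) := by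
    intro x; rw [hYstar x]
    split <;> simp_all
  have hγ1 : (0:ℝ) < 1 - γ := by
    have := hγ.2; linarith
  -- denominators
  have hden : ∀ h : 𝓧 → ℕ, Measurable h →
      (∫ x in {x | h x = 0}, S x ∂μ) = γ →
      (∫ x in {x | h x ≠ 0}, S x ∂μ) = 1 - γ := by
    intro h hh h0
    have hms : MeasurableSet {x | h x = 0} := hh (measurableSet_singleton 0)
    have hcompl : {x | h x ≠ 0} = {x | h x = 0}ᶜ := rfl
    have := integral_add_compl hms hSint
    rw [hcompl]
    rw [h0] at this
    rw [hdens] at this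
    linarith
  -- the numerator for Ystar equals the integral of g on {Ystar ≠ 0}
  have hNumY : (∑ i : Fin K, ∫ x in {x | Ystar x = i.val + 1}, p i * f i x ∂μ)
      = ∫ x in {x | Ystar x ≠ 0}, g x ∂μ := by
    rw [← sum_classes_integral μ Ystar hYmeas hYK g hgint]
    refine Finset.sum_congr rfl fun i _ => ?_
    refine setIntegral_congr_fun (hYmeas (measurableSet_singleton _)) fun x hx => ?_
    have hx' : Ystar x = i.val + 1 := hx
    have hxsel : sel x = i := by
      rw [hYstar x] at hx'
      by_cases hc : τ * S x ≤ g x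
      · rw [if_pos hc] at hx'
        exact Fin.ext (by omega)
      · rw [if_neg hc] at hx'; omega
    simp [hgdef, hxsel]
  -- key comparison: for any h with abstention mass γ, ∫_{h≠0} g ≤ ∫_{Y*≠0} g
  have hkey : ∀ h : 𝓧 → ℕ, Measurable h →
      (∫ x in {x | h x = 0}, S x ∂μ) = γ →
      (∫ x in {x | h x ≠ 0}, g x ∂μ) ≤ ∫ x in {x | Ystar x ≠ 0}, g x ∂μ := by
    intro h hh h0
    set A : Set 𝓧 := {x | h x ≠ 0} with hA
    set B : Set 𝓧 := {x | Ystar x ≠ 0} with hB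
    have hmA : MeasurableSet A := (hh (measurableSet_singleton 0)).compl
    have hmB : MeasurableSet B := (hYmeas (measurableSet_singleton 0)).compl
    -- split integrals
    have hsplitA : ∫ x in A, g x ∂μ
        = ∫ x in A ∩ B, g x ∂μ + ∫ x in A \ B, g x ∂μ :=
      (integral_inter_add_diff hmB hgint.integrableOn).symm
    have hsplitB : ∫ x in B, g x ∂μ
        = ∫ x in B ∩ A, g x ∂μ + ∫ x in B \ A, g x ∂μ :=
      (integral_inter_add_diff hmA hgint.integrableOn).symm
    have hAc : Aᶜ = {x | h x = 0} := by ext x; simp [hA]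
    have hBc : Bᶜ = {x | Ystar x = 0} := by ext x; simp [hB]
    have hSA : ∫ x in Aᶜ, S x ∂μ = γ := by rw [hAc]; exact h0
    have hSB : ∫ x in Bᶜ, S x ∂μ = γ := by rw [hBc]; exact hYstarγ
    -- S-masses of the two difference regions coincide
    have hSAc : ∫ x in Aᶜ ∩ Bᶜ, S x ∂μ + ∫ x in Aᶜ \ Bᶜ, S x ∂μ = γ := by
      rw [integral_inter_add_diff hmB.compl hSint.integrableOn, hSA]
    have hSBc : ∫ x in Bᶜ ∩ Aᶜ, S x ∂μ + ∫ x in Bᶜ \ Aᶜ, S x ∂μ = γ := by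
      rw [integral_inter_add_diff hmA.compl hSint.integrableOn, hSB]
    have hAB : Aᶜ ∩ Bᶜ = Bᶜ ∩ Aᶜ := Set.inter_comm _ _
    have hSdiff : ∫ x in Aᶜ \ Bᶜ, S x ∂μ = ∫ x in Bᶜ \ Aᶜ, S x ∂μ := by
      rw [hAB] at hSAc; linarith
    -- identify the regions: A \ B = Bᶜ \ Aᶜ and B \ A = Aᶜ \ Bᶜ
    have hABd : A \ B = Bᶜ \ Aᶜ := by
      ext x; simp only [Set.mem_diff, Set.mem_compl_iff, hA, hB, mem_setOf_eq]
      tauto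
    have hBAd : B \ A = Aᶜ \ Bᶜ := by
      ext x; simp only [Set.mem_diff, Set.mem_compl_iff, hA, hB, mem_setOf_eq]
      tauto
    -- pointwise bounds
    have hbound1 : ∫ x in A \ B, g x ∂μ ≤ τ * ∫ x in Bᶜ \ Aᶜ, S x ∂μ := by
      rw [hABd, ← integral_const_mul]
      refine setIntegral_mono_on hgint.integrableOn
        ((hSint.integrableOn).const_mul τ) (hmB.compl.diff hmA.compl)
        fun x hx => ?_
      have hx0 : Ystar x = 0 := by
        have := hx.1
        simp only [Set.mem_compl_iff, hB, mem_setOf_eq, not_not] at this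
        exact this
      have := (hY0 x).mp hx0
      linarith [not_le.mp this]
    have hbound2 : τ * ∫ x in Aᶜ \ Bᶜ, S x ∂μ ≤ ∫ x in B \ A, g x ∂μ := by
      rw [hBAd, ← integral_const_mul]
      refine setIntegral_mono_on ((hSint.integrableOn).const_mul τ)
        hgint.integrableOn (hmA.compl.diff hmB.compl) fun x hx => ?_
      have hx0 : Ystar x ≠ 0 := by
        have := hx.2
        simp only [Set.mem_compl_iff, hB, mem_setOf_eq, not_not] at this
        exact this
      have : ¬ ¬ (τ * S x ≤ g x) := fun hc => hx0 ((hY0 x).mpr hc)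
      exact not_not.mp this
    have hIAB : A ∩ B = B ∩ A := Set.inter_comm _ _
    rw [hsplitA, hsplitB, hIAB]
    have : ∫ x in A \ B, g x ∂μ ≤ ∫ x in B \ A, g x ∂μ := by
      calc ∫ x in A \ B, g x ∂μ ≤ τ * ∫ x in Bᶜ \ Aᶜ, S x ∂μ := hbound1
        _ = τ * ∫ x in Aᶜ \ Bᶜ, S x ∂μ := by rw [hSdiff]
        _ ≤ ∫ x in B \ A, g x ∂μ := hbound2
    linarith
  -- numerator bound for an arbitrary classifier
  have hNumh : ∀ h : 𝓧 → ℕ, Measurable h → (∀ x, h x ≤ K) →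
      (∑ i : Fin K, ∫ x in {x | h x = i.val + 1}, p i * f i x ∂μ)
        ≤ ∫ x in {x | h x ≠ 0}, g x ∂μ := by
    intro h hh hhK
    rw [← sum_classes_integral μ h hh hhK g hgint]
    refine Finset.sum_le_sum fun i _ => ?_
    exact setIntegral_mono_on ((hfint i).const_mul _).integrableOn
      hgint.integrableOn (hh (measurableSet_singleton _))
      fun x _ => hselmax x i
  have hdenY := hden Ystar hYmeas hYstarγ
  constructor
  · unfold condRiskK
    rw [hNumY, hdenY]
  · intro h hh hhK h0
    unfold condRiskK
    rw [hNumY, hdenY, hden h hh h0]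
    have h1 : (∑ i : Fin K, ∫ x in {x | h x = i.val + 1}, p i * f i x ∂μ)
        ≤ ∫ x in {x | Ystar x ≠ 0}, g x ∂μ :=
      (hNumh h hh hhK).trans (hkey h hh h0)
    have h2 := (div_le_div_iff_of_pos_right hγ1).mpr h1
    linarith
end

section
/- Under the monotone likelihood ratio property with the symmetry p₂f₂(x) = p₁f₁(-x) for all x (and X atomless), the optimal selective classifier is Y*_γ = 2·1{X ≥ τ_γ} + 1·1{X ≤ -τ_γ}, where τ_γ ≥ 0 satisfies P(-τ_γ ≤ X ≤ τ_γ) = γ, equivalently 1 - 2P(X ≥ τ_γ) = γ, and its conditional misclassification rate equals (p₁P₁(X ≥ τ_γ) + p₂P₂(X ≤ -τ_γ))/(1-γ). -/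
open MeasureTheory Set

/-!
Write `g₁ = p₁f₁`, `g₂ = p₂f₂` and `L = min g₁ g₂`. Any selective classifier `h` errs on
`{h = 2}` with mass `∫ g₁ ≥ ∫ L` and on `{h = 1}` with mass `∫ g₂ ≥ ∫ L`, so its risk is at
least `∫ L - ∫_{h = 0} L`; the rule `Y*` attains this bound with abstention region
`[-τ, τ]`, because MLR and the symmetry give `g₁ ≤ g₂` on `[0, ∞)` and `g₂ ≤ g₁` on `(-∞, 0]`.
It remains to see that `[-τ, τ]` maximises `∫ L` among regions of `X`-mass `γ`: MLR makes
`L / (g₁ + g₂)` decreasing in `|x|`, and a Neyman–Pearson exchange argument concludes.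
-/

section Exchange

variable {α : Type*} [MeasurableSpace α] {μ : Measure α} {L m : α → ℝ}

theorem setIntegral_mul_setIntegral_le_of_swap {S T : Set α} (hS : MeasurableSet S)
    (hT : MeasurableSet T) (hL : Integrable L μ) (hm : Integrable m μ)
    (hswap : ∀ x ∈ S, ∀ y ∈ T, L y * m x ≤ L x * m y) :
    (∫ y in T, L y ∂μ) * ∫ x in S, m x ∂μ ≤ (∫ x in S, L x ∂μ) * ∫ y in T, m y ∂μ := by
  have hpoint : ∀ y ∈ T, L y * ∫ x in S, m x ∂μ ≤ (∫ x in S, L x ∂μ) * m y := by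
    intro y hy
    rw [← integral_const_mul, ← integral_mul_const]
    exact setIntegral_mono_on (hm.integrableOn.const_mul _) (hL.integrableOn.mul_const _) hS
      fun x hx => hswap x hx y hy
  rw [← integral_mul_const, ← integral_const_mul]
  exact setIntegral_mono_on (hL.integrableOn.mul_const _) (hm.integrableOn.const_mul _) hT hpoint

theorem setIntegral_le_of_swap {A B : Set α} (hA : MeasurableSet A) (hB : MeasurableSet B)
    (hL : Integrable L μ) (hm : Integrable m μ) (hL0 : 0 ≤ L) (hLm : L ≤ m)
    (hswap : ∀ x ∈ A, ∀ y ∉ A, L y * m x ≤ L x * m y)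
    (hmass : ∫ x in B, m x ∂μ = ∫ x in A, m x ∂μ) :
    ∫ x in B, L x ∂μ ≤ ∫ x in A, L x ∂μ := by
  rw [← integral_inter_add_sdiff (s := B) hA hm.integrableOn,
    ← integral_inter_add_sdiff (s := A) hB hm.integrableOn, inter_comm B A, add_right_inj] at hmass
  rw [← integral_inter_add_sdiff (s := B) hA hL.integrableOn,
    ← integral_inter_add_sdiff (s := A) hB hL.integrableOn, inter_comm B A, add_le_add_iff_left]
  have key := setIntegral_mul_setIntegral_le_of_swap (hA.diff hB) (hB.diff hA) hL hm
    fun x hx y hy => hswap x hx.1 y hy.2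
  rw [hmass] at key
  rcases (setIntegral_nonneg (hA.diff hB) fun x _ => (hL0 x).trans (hLm x)).eq_or_lt
    with hzero | hpos
  · calc ∫ x in B \ A, L x ∂μ ≤ ∫ x in B \ A, m x ∂μ :=
          setIntegral_mono hL.integrableOn hm.integrableOn hLm
      _ = 0 := by rw [hmass, hzero]
      _ ≤ ∫ x in A \ B, L x ∂μ := setIntegral_nonneg (hA.diff hB) fun x _ => hL0 x
  · exact le_of_mul_le_mul_right key hpos

theorem integral_levelSets_of_le_two {h : α → ℕ} (hh : Measurable h) (h2 : ∀ x, h x ≤ 2)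
    {g : α → ℝ} (hg : Integrable g μ) :
    ∫ x in {x | h x = 0}, g x ∂μ +
        (∫ x in {x | h x = 1}, g x ∂μ + ∫ x in {x | h x = 2}, g x ∂μ) = ∫ x, g x ∂μ := by
  have hcompl : {x | h x = 0}ᶜ = {x | h x = 1} ∪ {x | h x = 2} := by
    ext x
    have := h2 x
    simp only [mem_compl_iff, mem_ofPred_eq, mem_union]
    omega
  have hdisj : Disjoint {x | h x = 1} {x | h x = 2} :=
    disjoint_left.2 fun x (h1 : h x = 1) (h2 : h x = 2) => by omega
  have h0 : MeasurableSet {x | h x = 0} := hh (measurableSet_singleton 0)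
  rw [← setIntegral_union hdisj (hh (measurableSet_singleton 2)) hg.integrableOn hg.integrableOn,
    ← hcompl, integral_add_compl h0 hg]

theorem integral_min_sub_setIntegral_min_le {g₁ g₂ : α → ℝ} (hg₁ : Integrable g₁ μ) (hg₂ : Integrable g₂ μ)
    {h : α → ℕ} (hh : Measurable h) (h2 : ∀ x, h x ≤ 2) :
    ∫ x, min (g₁ x) (g₂ x) ∂μ - ∫ x in {x | h x = 0}, min (g₁ x) (g₂ x) ∂μ ≤
      ∫ x in {x | h x = 2}, g₁ x ∂μ + ∫ x in {x | h x = 1}, g₂ x ∂μ := by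
  have hL : Integrable (fun x => min (g₁ x) (g₂ x)) μ := hg₁.inf hg₂
  rw [← integral_levelSets_of_le_two hh h2 hL]
  have e₂ : ∫ x in {x | h x = 2}, min (g₁ x) (g₂ x) ∂μ ≤ ∫ x in {x | h x = 2}, g₁ x ∂μ :=
    setIntegral_mono hL.integrableOn hg₁.integrableOn fun x => min_le_left _ _
  have e₁ : ∫ x in {x | h x = 1}, min (g₁ x) (g₂ x) ∂μ ≤ ∫ x in {x | h x = 1}, g₂ x ∂μ :=
    setIntegral_mono hL.integrableOn hg₂.integrableOn fun x => min_le_right _ _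
  linarith

end Exchange

theorem Function.Even.apply_abs {β : Type*} {f : ℝ → β} (hf : Function.Even f) (x : ℝ) :
    f |x| = f x := by
  rcases abs_choice x with h | h <;> rw [h]
  exact hf x

theorem integral_Iic_add_Icc_add_Ici {g : ℝ → ℝ} (hg : Integrable g) {a b : ℝ} (hab : a ≤ b) :
    (∫ x in Iic a, g x) + ((∫ x in Icc a b, g x) + ∫ x in Ici b, g x) = ∫ x, g x := by
  rw [← setIntegral_congr_set Ioc_ae_eq_Icc, ← setIntegral_congr_set Ioi_ae_eq_Ici,
    ← setIntegral_union (Ioc_disjoint_Ioi le_rfl) measurableSet_Ioi hg.integrableOn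
      hg.integrableOn, Ioc_union_Ioi_eq_Ioi hab,
    intervalIntegral.integral_Iic_add_Ioi hg.integrableOn hg.integrableOn]

theorem Function.Even.setIntegral_Ici {g : ℝ → ℝ} (hg : Function.Even g) (τ : ℝ) :
    ∫ x in Ici τ, g x = ∫ x in Iic (-τ), g x := by
  rw [← integral_comp_neg_Ioi, integral_Ici_eq_integral_Ioi]
  exact integral_congr_ae (Filter.Eventually.of_forall fun x => (hg x).symm)

theorem Function.Even.two_mul_setIntegral_Ici_add_setIntegral_Icc {g : ℝ → ℝ}
    (hg : Function.Even g) (hi : Integrable g) {τ : ℝ} (hτ : 0 ≤ τ) :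
    2 * (∫ x in Ici τ, g x) + ∫ x in Icc (-τ) τ, g x = ∫ x, g x := by
  rw [← integral_Iic_add_Icc_add_Ici hi (neg_le_self hτ), hg.setIntegral_Ici]
  ring

section ThresholdRule

variable {τ : ℝ} {Y : ℝ → ℕ}

theorem setOf_threshold_eq_two (hY : ∀ x, Y x = if τ ≤ x then 2 else if x ≤ -τ then 1 else 0) :
    {x | Y x = 2} = Ici τ := by
  ext x
  simp only [mem_ofPred_eq, mem_Ici, hY]
  split_ifs with h <;> simp [h]

theorem setOf_threshold_eq_one_ae_eq (hτ : 0 ≤ τ)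
    (hY : ∀ x, Y x = if τ ≤ x then 2 else if x ≤ -τ then 1 else 0) :
    {x | Y x = 1} =ᵐ[volume] Iic (-τ) := by
  have hset : {x | Y x = 1} = Iic (-τ) ∩ Iio τ := by
    ext x
    simp only [mem_ofPred_eq, mem_inter_iff, mem_Iic, mem_Iio, hY]
    split_ifs <;> simp_all
  rw [hset]
  exact ((ae_eq_refl _).inter Iio_ae_eq_Iic).trans
    (inter_eq_left.2 (Iic_subset_Iic.2 (neg_le_self hτ))).eventuallyEq

end ThresholdRule

structure IsSymmetricMLR (g₁ g₂ : ℝ → ℝ) : Prop where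
  nonneg : ∀ x, 0 ≤ g₁ x
  symm : ∀ x, g₂ x = g₁ (-x)
  mlr : ∀ x y, x ≤ y → g₂ x * g₁ y ≤ g₂ y * g₁ x

namespace IsSymmetricMLR

variable {g₁ g₂ : ℝ → ℝ}

theorem even_add (hS : IsSymmetricMLR g₁ g₂) : Function.Even fun x => g₁ x + g₂ x :=
  fun x => by simp only [hS.symm, neg_neg, add_comm]

theorem even_min (hS : IsSymmetricMLR g₁ g₂) : Function.Even fun x => min (g₁ x) (g₂ x) :=
  fun x => by simp only [hS.symm, neg_neg, min_comm]

theorem nonneg_right (hS : IsSymmetricMLR g₁ g₂) (x : ℝ) : 0 ≤ g₂ x :=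
  hS.symm x ▸ hS.nonneg (-x)

theorem le_of_nonneg (hS : IsSymmetricMLR g₁ g₂) {x : ℝ} (hx : 0 ≤ x) : g₁ x ≤ g₂ x := by
  rw [mul_self_le_mul_self_iff (hS.nonneg x) (hS.nonneg_right x)]
  calc g₁ x * g₁ x = g₂ (-x) * g₁ x := by rw [hS.symm, neg_neg]
    _ ≤ g₂ x * g₁ (-x) := hS.mlr (-x) x (by linarith)
    _ = g₂ x * g₂ x := by rw [hS.symm x]

theorem le_of_nonpos (hS : IsSymmetricMLR g₁ g₂) {x : ℝ} (hx : x ≤ 0) : g₂ x ≤ g₁ x := by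
  simpa only [← hS.symm, hS.symm (-x), neg_neg] using hS.le_of_nonneg (neg_nonneg.2 hx)

theorem min_mul_add_le_of_abs_le (hS : IsSymmetricMLR g₁ g₂) {x y : ℝ} (hxy : |x| ≤ |y|) :
    min (g₁ y) (g₂ y) * (g₁ x + g₂ x) ≤ min (g₁ x) (g₂ x) * (g₁ y + g₂ y) := by
  have key : ∀ a b, 0 ≤ a → a ≤ b →
      min (g₁ b) (g₂ b) * (g₁ a + g₂ a) ≤ min (g₁ a) (g₂ a) * (g₁ b + g₂ b) := by
    intro a b ha hab
    rw [min_eq_left (hS.le_of_nonneg ha), min_eq_left (hS.le_of_nonneg (ha.trans hab))]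
    linarith [hS.mlr a b hab]
  simpa only [hS.even_min.apply_abs, hS.even_add.apply_abs]
    using key |x| |y| (abs_nonneg x) hxy

theorem integral_Ici_add_integral_Iic_neg (hS : IsSymmetricMLR g₁ g₂) (hi₁ : Integrable g₁)
    (hi₂ : Integrable g₂) {τ : ℝ} (hτ : 0 ≤ τ) :
    (∫ x in Ici τ, g₁ x) + ∫ x in Iic (-τ), g₂ x =
      (∫ x, min (g₁ x) (g₂ x)) - ∫ x in Icc (-τ) τ, min (g₁ x) (g₂ x) := by
  have h₁ : ∫ x in Ici τ, g₁ x = ∫ x in Ici τ, min (g₁ x) (g₂ x) :=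
    setIntegral_congr_fun measurableSet_Ici fun x hx =>
      (min_eq_left (hS.le_of_nonneg (hτ.trans hx))).symm
  have h₂ : ∫ x in Iic (-τ), g₂ x = ∫ x in Iic (-τ), min (g₁ x) (g₂ x) :=
    setIntegral_congr_fun measurableSet_Iic fun x (hx : x ≤ -τ) =>
      (min_eq_right (hS.le_of_nonpos (hx.trans (neg_nonpos.2 hτ)))).symm
  have := integral_Iic_add_Icc_add_Ici (hi₁.inf hi₂ : Integrable fun x => min (g₁ x) (g₂ x))
    (neg_le_self hτ)
  linarith

theorem setIntegral_min_le_Icc (hS : IsSymmetricMLR g₁ g₂) (hi₁ : Integrable g₁)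
    (hi₂ : Integrable g₂) {τ : ℝ} {B : Set ℝ} (hB : MeasurableSet B)
    (hmass : ∫ x in B, (g₁ x + g₂ x) = ∫ x in Icc (-τ) τ, (g₁ x + g₂ x)) :
    ∫ x in B, min (g₁ x) (g₂ x) ≤ ∫ x in Icc (-τ) τ, min (g₁ x) (g₂ x) := by
  refine setIntegral_le_of_swap measurableSet_Icc hB (hi₁.inf hi₂) (hi₁.add hi₂)
    (fun x => le_min (hS.nonneg x) (hS.nonneg_right x))
    (fun x => (min_le_left _ _).trans (le_add_of_nonneg_right (hS.nonneg_right x)))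
    (fun x hx y hy => hS.min_mul_add_le_of_abs_le ((abs_le.2 hx).trans ?_)) hmass
  exact (not_le.1 fun h => hy (abs_le.1 h)).le

end IsSymmetricMLR

theorem mlr_symmetric_selective_optimal_general
    (f₁ f₂ : ℝ → ℝ) (p₁ p₂ : ℝ) (γ τ : ℝ) (hτ : 0 ≤ τ)
    (hf₁0 : ∀ x, 0 ≤ f₁ x)
    (hp₁ : 0 < p₁) (hp₂ : 0 < p₂) (hpsum : p₁ + p₂ = 1)
    (hf₁int : Integrable f₁) (hf₂int : Integrable f₂)
    (hf₁prob : ∫ x, f₁ x = 1) (hf₂prob : ∫ x, f₂ x = 1)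
    -- monotone likelihood ratio: `f₂/f₁` is increasing
    (hMLR : ∀ x y : ℝ, x ≤ y → f₂ x * f₁ y ≤ f₂ y * f₁ x)
    -- symmetry: `p₂ f₂(x) = p₁ f₁(-x)`
    (hsym : ∀ x : ℝ, p₂ * f₂ x = p₁ * f₁ (-x))
    -- threshold calibration: `P(-τ ≤ X ≤ τ) = γ`
    (hτγ : ∫ x in Icc (-τ) τ, (p₁ * f₁ x + p₂ * f₂ x) = γ)
    (Ystar : ℝ → ℕ)
    (hYstar : ∀ x : ℝ, Ystar x = if τ ≤ x then 2 else if x ≤ -τ then 1 else 0) :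
    -- equivalently `1 - 2 P(X ≥ τ_γ) = γ`
    1 - 2 * (∫ x in Ici τ, (p₁ * f₁ x + p₂ * f₂ x)) = γ ∧
    -- conditional misclassification rate of `Y*_γ`
    ((∫ x in {x | Ystar x = 2}, p₁ * f₁ x) + ∫ x in {x | Ystar x = 1}, p₂ * f₂ x) /
        (1 - γ) =
      (p₁ * (∫ x in Ici τ, f₁ x) + p₂ * ∫ x in Iic (-τ), f₂ x) / (1 - γ) ∧
    -- optimality
    ∀ h : ℝ → ℕ, Measurable h → (∀ x, h x ≤ 2) →
      (∫ x in {x | h x = 0}, (p₁ * f₁ x + p₂ * f₂ x)) = γ →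
      ((∫ x in {x | Ystar x = 2}, p₁ * f₁ x) +
          ∫ x in {x | Ystar x = 1}, p₂ * f₂ x) / (1 - γ) ≤
        ((∫ x in {x | h x = 2}, p₁ * f₁ x) +
            ∫ x in {x | h x = 1}, p₂ * f₂ x) / (1 - γ) := by
  have hS : IsSymmetricMLR (fun x => p₁ * f₁ x) (fun x => p₂ * f₂ x) :=
    ⟨fun x => mul_nonneg hp₁.le (hf₁0 x), hsym,
      fun x y hxy => by nlinarith [hMLR x y hxy, mul_pos hp₁ hp₂]⟩
  have hg₁ : Integrable fun x => p₁ * f₁ x := hf₁int.const_mul p₁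
  have hg₂ : Integrable fun x => p₂ * f₂ x := hf₂int.const_mul p₂
  have hcal : 1 - 2 * ∫ x in Ici τ, (p₁ * f₁ x + p₂ * f₂ x) = γ := by
    have hsplit := hS.even_add.two_mul_setIntegral_Ici_add_setIntegral_Icc
      (hg₁.add hg₂ : Integrable fun x => p₁ * f₁ x + p₂ * f₂ x) hτ
    rw [hτγ, integral_add hg₁ hg₂, integral_const_mul, integral_const_mul, hf₁prob,
      hf₂prob] at hsplit
    linarith
  have hrisk : (∫ x in {x | Ystar x = 2}, p₁ * f₁ x) + ∫ x in {x | Ystar x = 1}, p₂ * f₂ x =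
      p₁ * (∫ x in Ici τ, f₁ x) + p₂ * ∫ x in Iic (-τ), f₂ x := by
    rw [setOf_threshold_eq_two hYstar,
      setIntegral_congr_set (setOf_threshold_eq_one_ae_eq hτ hYstar), integral_const_mul,
      integral_const_mul]
  refine ⟨hcal, by rw [hrisk], fun h hh h2 habst => ?_⟩
  have hγ1 : 0 ≤ 1 - γ := by
    rw [← hcal, sub_sub_cancel]
    exact mul_nonneg zero_le_two <| setIntegral_nonneg measurableSet_Ici fun x _ =>
      add_nonneg (hS.nonneg x) (hS.nonneg_right x)
  rw [hrisk]
  refine div_le_div_of_nonneg_right ?_ hγ1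
  rw [← integral_const_mul, ← integral_const_mul, hS.integral_Ici_add_integral_Iic_neg hg₁ hg₂ hτ]
  calc _ ≤ (∫ x, min (p₁ * f₁ x) (p₂ * f₂ x)) -
        ∫ x in {x | h x = 0}, min (p₁ * f₁ x) (p₂ * f₂ x) :=
        sub_le_sub_left (hS.setIntegral_min_le_Icc hg₁ hg₂ (hh (measurableSet_singleton 0))
          (habst.trans hτγ.symm)) _
    _ ≤ _ := integral_min_sub_setIntegral_min_le hg₁ hg₂ hh h2

/-- Selective classification under the monotone likelihood ratio property with the
symmetry `p₂f₂(x) = p₁f₁(-x)` (atomless `X`): the optimal selective classifier is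
`Y*_γ = 2·1{X ≥ τ_γ} + 1·1{X ≤ -τ_γ}` with `τ_γ ≥ 0` such that
`P(-τ_γ ≤ X ≤ τ_γ) = γ`, equivalently `1 - 2P(X ≥ τ_γ) = γ`; its conditional
misclassification rate equals `(p₁P₁(X ≥ τ_γ) + p₂P₂(X ≤ -τ_γ))/(1-γ)` and it
minimizes the conditional misclassification rate among all selective classifiers
with abstention probability `γ`. -/
theorem mlr_symmetric_selective_optimal
    (f₁ f₂ : ℝ → ℝ) (p₁ p₂ : ℝ) (γ τ : ℝ) (hτ : 0 ≤ τ)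
    (hγ : γ ∈ Ico (0 : ℝ) 1)
    (hf₁ : Measurable f₁) (hf₂ : Measurable f₂)
    (hf₁0 : ∀ x, 0 ≤ f₁ x) (hf₂0 : ∀ x, 0 ≤ f₂ x)
    (hp₁ : 0 < p₁) (hp₂ : 0 < p₂) (hpsum : p₁ + p₂ = 1)
    (hf₁int : Integrable f₁) (hf₂int : Integrable f₂)
    (hf₁prob : ∫ x, f₁ x = 1) (hf₂prob : ∫ x, f₂ x = 1)
    -- monotone likelihood ratio: `f₂/f₁` is increasing
    (hMLR : ∀ x y : ℝ, x ≤ y → f₂ x * f₁ y ≤ f₂ y * f₁ x)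
    -- symmetry: `p₂ f₂(x) = p₁ f₁(-x)`
    (hsym : ∀ x : ℝ, p₂ * f₂ x = p₁ * f₁ (-x))
    -- `X` has no atoms: the mixture density gives zero mass to points
    (hatomless : ∀ t : ℝ, ∫ x in {t}, (p₁ * f₁ x + p₂ * f₂ x) = 0)
    -- threshold calibration: `P(-τ ≤ X ≤ τ) = γ`
    (hτγ : ∫ x in Icc (-τ) τ, (p₁ * f₁ x + p₂ * f₂ x) = γ)
    (Ystar : ℝ → ℕ)
    (hYstar : ∀ x : ℝ, Ystar x = if τ ≤ x then 2 else if x ≤ -τ then 1 else 0) :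
    -- equivalently `1 - 2 P(X ≥ τ_γ) = γ`
    1 - 2 * (∫ x in Ici τ, (p₁ * f₁ x + p₂ * f₂ x)) = γ ∧
    -- conditional misclassification rate of `Y*_γ`
    ((∫ x in {x | Ystar x = 2}, p₁ * f₁ x) + ∫ x in {x | Ystar x = 1}, p₂ * f₂ x) /
        (1 - γ) =
      (p₁ * (∫ x in Ici τ, f₁ x) + p₂ * ∫ x in Iic (-τ), f₂ x) / (1 - γ) ∧
    -- optimality
    ∀ h : ℝ → ℕ, Measurable h → (∀ x, h x ≤ 2) →
      (∫ x in {x | h x = 0}, (p₁ * f₁ x + p₂ * f₂ x)) = γ →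
      ((∫ x in {x | Ystar x = 2}, p₁ * f₁ x) +
          ∫ x in {x | Ystar x = 1}, p₂ * f₂ x) / (1 - γ) ≤
        ((∫ x in {x | h x = 2}, p₁ * f₁ x) +
            ∫ x in {x | h x = 1}, p₂ * f₂ x) / (1 - γ) :=
  mlr_symmetric_selective_optimal_general f₁ f₂ p₁ p₂ γ τ hτ hf₁0 hp₁ hp₂ hpsum hf₁int hf₂int
    hf₁prob hf₂prob hMLR hsym hτγ Ystar hYstar
end
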